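/- arXiv:1601.06319 — 10 statements merged into one kernel-verified Lean document; each statement's English description precedes it below -/
import Mathlib

section
/- Let G be a graph with edge set E of size m ≥ 1. If a weight function w : E → {1, 2, ..., 2m} is chosen uniformly at random (each of the (2m)^m functions equally likely, i.e., each edge receives an independent uniform weight from {1,...,2m}), then with probability at least 1/2 the weight function w is isolating for G; equivalently, at least half of all weight functions w : E → {1,...,2m} are isolating for G. -/
/-- `M` is a perfect matching of the graph `G`: every edge of `M` is an edge of `G`,
and every vertex lies in exactly one edge of `M`. -/
def IsPerfectMatching {V : Type*} (G : SimpleGraph V) (M : Finset (Sym2 V)) : Prop :=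
  (∀ e ∈ M, e ∈ G.edgeSet) ∧ ∀ v : V, ∃! e, e ∈ M ∧ v ∈ e

/-- The weight of a matching is the sum of the weights of its edges. -/
def matchWeight {V : Type*} (w : Sym2 V → ℤ) (M : Finset (Sym2 V)) : ℤ := ∑ e ∈ M, w e

/-- A weight function is isolating for `G` if `G` has at most one perfect matching
of minimum weight. -/
def Isolating {V : Type*} (G : SimpleGraph V) (w : Sym2 V → ℤ) : Prop :=
  ∀ M₁ M₂ : Finset (Sym2 V), IsPerfectMatching G M₁ → IsPerfectMatching G M₂ →
    (∀ M, IsPerfectMatching G M → matchWeight w M₁ ≤ matchWeight w M) →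
    (∀ M, IsPerfectMatching G M → matchWeight w M₂ ≤ matchWeight w M) →
    M₁ = M₂

/-- Auxiliary: `e0` is a "singular" edge for `w`: there are minimum-weight perfect
matchings both containing and avoiding `e0`. -/
def BadAt {V : Type*} (G : SimpleGraph V) (w : Sym2 V → ℤ) (e0 : Sym2 V) : Prop :=
  ∃ M₁ M₂ : Finset (Sym2 V), IsPerfectMatching G M₁ ∧ IsPerfectMatching G M₂ ∧
    e0 ∈ M₁ ∧ e0 ∉ M₂ ∧
    (∀ M, IsPerfectMatching G M → matchWeight w M₁ ≤ matchWeight w M) ∧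
    (∀ M, IsPerfectMatching G M → matchWeight w M₂ ≤ matchWeight w M)

lemma matchWeight_congr_off {V : Type*} (w₁ w₂ : Sym2 V → ℤ) (e0 : Sym2 V)
    (hw : ∀ e, e ≠ e0 → w₁ e = w₂ e) (M : Finset (Sym2 V)) (hM : e0 ∉ M) :
    matchWeight w₁ M = matchWeight w₂ M := by
  refine Finset.sum_congr rfl fun e he => hw e ?_
  rintro rfl; exact hM he

lemma matchWeight_congr_in {V : Type*} [DecidableEq V] (w₁ w₂ : Sym2 V → ℤ) (e0 : Sym2 V)
    (hw : ∀ e, e ≠ e0 → w₁ e = w₂ e) (M : Finset (Sym2 V)) (hM : e0 ∈ M) :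
    matchWeight w₁ M + w₂ e0 = matchWeight w₂ M + w₁ e0 := by
  unfold matchWeight
  rw [← Finset.add_sum_erase _ w₁ hM, ← Finset.add_sum_erase _ w₂ hM]
  have : ∑ e ∈ M.erase e0, w₁ e = ∑ e ∈ M.erase e0, w₂ e := by
    refine Finset.sum_congr rfl fun e he => hw e (Finset.ne_of_mem_erase he)
  rw [this]; ring

lemma badAt_weight_eq {V : Type*} [DecidableEq V] (G : SimpleGraph V)
    (w₁ w₂ : Sym2 V → ℤ) (e0 : Sym2 V) (hw : ∀ e, e ≠ e0 → w₁ e = w₂ e)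
    (h₁ : BadAt G w₁ e0) (h₂ : BadAt G w₂ e0) : w₁ e0 = w₂ e0 := by
  obtain ⟨A₁, A₂, hA₁, hA₂, heA₁, heA₂, hminA₁, hminA₂⟩ := h₁
  obtain ⟨B₁, B₂, hB₁, hB₂, heB₁, heB₂, hminB₁, hminB₂⟩ := h₂
  have e1 : matchWeight w₁ A₂ = matchWeight w₂ A₂ := matchWeight_congr_off _ _ _ hw _ heA₂
  have e2 : matchWeight w₁ B₂ = matchWeight w₂ B₂ := matchWeight_congr_off _ _ _ hw _ heB₂
  have e3 : matchWeight w₁ A₁ + w₂ e0 = matchWeight w₂ A₁ + w₁ e0 :=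
    matchWeight_congr_in _ _ _ hw _ heA₁
  have e4 : matchWeight w₁ B₁ + w₂ e0 = matchWeight w₂ B₁ + w₁ e0 :=
    matchWeight_congr_in _ _ _ hw _ heB₁
  have i1 := hminA₁ A₂ hA₂
  have i2 := hminA₂ A₁ hA₁
  have i3 := hminB₁ B₂ hB₂
  have i4 := hminB₂ B₁ hB₁
  have i5 := hminA₁ B₁ hB₁
  have i6 := hminA₁ B₂ hB₂
  have i7 := hminB₁ A₁ hA₁
  have i8 := hminB₁ A₂ hA₂
  have i9 := hminB₂ A₂ hA₂
  have i10 := hminA₂ B₂ hB₂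
  linarith

lemma not_isolating_badAt {V : Type*} (G : SimpleGraph V) (w : Sym2 V → ℤ)
    (h : ¬ Isolating G w) : ∃ e0 ∈ G.edgeSet, BadAt G w e0 := by
  unfold Isolating at h
  push_neg at h
  obtain ⟨M₁, M₂, hM₁, hM₂, hmin₁, hmin₂, hne⟩ := h
  by_cases hsub : M₁ ⊆ M₂
  · obtain ⟨e0, he₂, he₁⟩ := Finset.not_subset.mp
      (fun h' => hne (Finset.Subset.antisymm hsub h'))
    exact ⟨e0, hM₂.1 e0 he₂, M₂, M₁, hM₂, hM₁, he₂, he₁, hmin₂, hmin₁⟩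
  · obtain ⟨e0, he₁, he₂⟩ := Finset.not_subset.mp hsub
    exact ⟨e0, hM₁.1 e0 he₁, M₁, M₂, hM₁, hM₂, he₁, he₂, hmin₁, hmin₂⟩

/-- **Isolation Lemma.** If each edge of a graph `G` with `m ≥ 1` edges independently
receives a uniformly random weight from `{1, …, 2m}`, then the resulting weight function
is isolating with probability at least `1/2`; equivalently, at least half of all
weight functions `E → {1, …, 2m}` are isolating for `G`. -/
theorem isolation_lemma {V : Type*} [Fintype V] [DecidableEq V]
    (G : SimpleGraph V) [DecidableRel G.Adj]
    (m : ℕ) (hm : m = G.edgeFinset.card) (hm1 : 1 ≤ m) :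
    Nat.card (G.edgeFinset → Fin (2 * m)) ≤
      2 * Nat.card {f : G.edgeFinset → Fin (2 * m) //
        Isolating G (fun e =>
          if h : e ∈ G.edgeFinset then ((f ⟨e, h⟩ : ℕ) : ℤ) + 1 else 0)} := by
  classical
  set wt : (G.edgeFinset → Fin (2 * m)) → Sym2 V → ℤ := fun f e =>
    if h : e ∈ G.edgeFinset then ((f ⟨e, h⟩ : ℕ) : ℤ) + 1 else 0 with hwt
  have hcardE : Fintype.card G.edgeFinset = m := by
    rw [Fintype.card_coe, hm]
  -- counting setup
  have hN : Nat.card (G.edgeFinset → Fin (2 * m)) = (2 * m) ^ m := by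
    rw [Nat.card_eq_fintype_card, Fintype.card_fun, Fintype.card_fin, hcardE]
  have hS : Nat.card {f : G.edgeFinset → Fin (2 * m) // Isolating G (wt f)} =
      (Finset.univ.filter (fun f : G.edgeFinset → Fin (2 * m) => Isolating G (wt f))).card := by
    rw [Nat.card_eq_fintype_card, Fintype.card_subtype]
  rw [hN, hS]
  set Iso := Finset.univ.filter (fun f : G.edgeFinset → Fin (2 * m) => Isolating G (wt f))
    with hIso
  set Bads := Finset.univ.filter
    (fun f : G.edgeFinset → Fin (2 * m) => ¬ Isolating G (wt f)) with hBads
  have hsplit : Iso.card + Bads.card = (2 * m) ^ m := by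
    rw [hIso, hBads, Finset.card_filter_add_card_filter_not,
      Finset.card_univ, Fintype.card_fun, Fintype.card_fin, hcardE]
  -- Bads is covered by the union of singular-edge events
  have hcover : Bads ⊆ G.edgeFinset.attach.biUnion (fun e0 =>
      Finset.univ.filter (fun f : G.edgeFinset → Fin (2 * m) => BadAt G (wt f) e0.1)) := by
    intro f hf
    rw [hBads, Finset.mem_filter] at hf
    obtain ⟨e0, he0, hbad⟩ := not_isolating_badAt G (wt f) hf.2
    rw [← SimpleGraph.mem_edgeFinset] at he0
    exact Finset.mem_biUnion.mpr ⟨⟨e0, he0⟩, Finset.mem_attach _ _,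
      Finset.mem_filter.mpr ⟨Finset.mem_univ _, hbad⟩⟩
  -- each singular-edge event has small cardinality
  have hone : ∀ e0 : G.edgeFinset,
      (Finset.univ.filter (fun f : G.edgeFinset → Fin (2 * m) => BadAt G (wt f) e0.1)).card ≤
      (2 * m) ^ (m - 1) := by
    intro e0
    have hinj : Set.InjOn (fun (f : G.edgeFinset → Fin (2 * m)) =>
        (fun x : {x : G.edgeFinset // x ≠ e0} => f x.1))
        ↑(Finset.univ.filter (fun f : G.edgeFinset → Fin (2 * m) => BadAt G (wt f) e0.1)) := by
      intro f hf g hg hfg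
      simp only [Finset.coe_filter, Set.mem_setOf_eq, Finset.mem_univ, true_and] at hf hg
      have hoff : ∀ e, e ≠ (e0 : Sym2 V) → wt f e = wt g e := by
        intro e he
        simp only [hwt]
        by_cases h : e ∈ G.edgeFinset
        · simp only [dif_pos h]
          have : (⟨e, h⟩ : G.edgeFinset) ≠ e0 := by
            intro hx
            exact he (congrArg Subtype.val hx)
          have := congrFun hfg ⟨⟨e, h⟩, this⟩
          simp only at this
          rw [this]
        · simp [h]
      have := badAt_weight_eq G (wt f) (wt g) e0.1 hoff hf hg
      have hval : f e0 = g e0 := by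
        simp only [hwt, dif_pos e0.2] at this
        have : ((f e0 : ℕ) : ℤ) = ((g e0 : ℕ) : ℤ) := by
          simpa [Subtype.coe_eta] using this
        exact Fin.ext (by exact_mod_cast this)
      funext x
      by_cases hx : x = e0
      · rw [hx]; exact hval
      · exact congrFun hfg ⟨x, hx⟩
    have := Finset.card_le_card_of_injOn _ (fun f _ => Finset.mem_univ _) hinj
    refine this.trans ?_
    have hsub : Fintype.card {x : G.edgeFinset // x ≠ e0} = m - 1 := by
      rw [Fintype.card_subtype_compl, Fintype.card_subtype_eq, hcardE]
    rw [Finset.card_univ, Fintype.card_fun, Fintype.card_fin, hsub]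
  have hBcard : Bads.card ≤ m * (2 * m) ^ (m - 1) := by
    calc Bads.card ≤ (G.edgeFinset.attach.biUnion (fun e0 =>
          Finset.univ.filter (fun f : G.edgeFinset → Fin (2 * m) =>
            BadAt G (wt f) e0.1))).card := Finset.card_le_card hcover
      _ ≤ ∑ e0 ∈ G.edgeFinset.attach,
          (Finset.univ.filter (fun f : G.edgeFinset → Fin (2 * m) =>
            BadAt G (wt f) e0.1)).card := Finset.card_biUnion_le
      _ ≤ ∑ _e0 ∈ G.edgeFinset.attach, (2 * m) ^ (m - 1) :=
          Finset.sum_le_sum (fun e0 _ => hone e0)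
      _ = m * (2 * m) ^ (m - 1) := by
          rw [Finset.sum_const, Finset.card_attach, ← hm, smul_eq_mul]
  have hpow : (2 * m) ^ m = 2 * (m * (2 * m) ^ (m - 1)) := by
    rcases Nat.exists_eq_add_of_le hm1 with ⟨k, hk⟩
    subst hk
    have h1 : 1 + k - 1 = k := by omega
    rw [h1, pow_add, pow_one]
    ring
  omega
end

section
/- Let G be a graph that has a perfect matching, and let w be an integer weight function on its edges such that every nice cycle of G has nonzero circulation c_w(C) ≠ 0. Then the minimum w-weight perfect matching of G is unique; that is, w is isolating for G. -/
/-- The alternating sum `a₁ - a₂ + a₃ - ⋯` of a list. -/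
def altSum : List ℤ → ℤ
  | [] => 0
  | a :: l => a - altSum l

/-- The circulation of a cycle (given by the list of its edges in cyclic order):
the absolute value of the alternating sum of the edge weights. -/
def circulation {V : Type*} (w : Sym2 V → ℤ) (l : List (Sym2 V)) : ℤ :=
  |altSum (l.map w)|

/-- The closed walk `c` is a nice cycle of `G`: deleting its vertices from `G`
leaves a graph that still has a perfect matching. -/
def IsNiceCycle {V : Type*} (G : SimpleGraph V) {v : V} (c : G.Walk v v) : Prop :=
  ∃ M : Finset (Sym2 V), (∀ e ∈ M, e ∈ G.edgeSet) ∧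
    (∀ e ∈ M, ∀ u, u ∈ e → u ∉ c.support) ∧
    (∀ u : V, u ∉ c.support → ∃! e, e ∈ M ∧ u ∈ e)


open SimpleGraph Finset
open scoped symmDiff

theorem altSum_map_eq_sum_sub_sum {α : Type*} [DecidableEq α] (f : α → ℤ) {P : α → Prop}
    [DecidablePred P] {l : List α} (hl : l.Nodup) (hchain : l.IsChain (fun a b => P a ↔ ¬P b))
    (hhead : ∀ a ∈ l.head?, P a) :
    altSum (l.map f) = ∑ a ∈ l.toFinset with P a, f a - ∑ a ∈ l.toFinset with ¬P a, f a := by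
  induction l generalizing P with
  | nil => simp [altSum]
  | cons a l ih =>
    have ha : P a := hhead a rfl
    obtain ⟨hal, hl⟩ := List.nodup_cons.mp hl
    have htail := ih (P := fun b => ¬P b) hl (hchain.tail.imp fun b c h => by tauto) <| by
      cases l with
      | nil => simp
      | cons b t => simpa using (List.isChain_cons_cons.mp hchain).1.mp ha
    rw [List.map_cons, altSum, htail, List.toFinset_cons, filter_insert, filter_insert, if_pos ha,
      if_neg (not_not.mpr ha), sum_insert fun h => hal (List.mem_toFinset.mp (mem_filter.mp h).1)]
    simp only [not_not]
    ring

theorem abs_altSum_map_eq {α : Type*} [DecidableEq α] (f : α → ℤ) {P : α → Prop}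
    [DecidablePred P] {l : List α} (hl : l.Nodup) (hchain : l.IsChain (fun a b => P a ↔ ¬P b)) :
    |altSum (l.map f)| = |∑ a ∈ l.toFinset with P a, f a - ∑ a ∈ l.toFinset with ¬P a, f a| := by
  cases l with
  | nil => simp [altSum]
  | cons a t =>
    by_cases ha : P a
    · rw [altSum_map_eq_sum_sub_sum f hl hchain (by simpa using ha)]
    · rw [altSum_map_eq_sum_sub_sum (P := fun b => ¬P b) f hl (hchain.imp fun b c h => by tauto)
        (by simpa using ha), abs_sub_comm]
      simp only [not_not]

section

variable {V : Type*} {G : SimpleGraph V} {M M₁ M₂ : Finset (Sym2 V)}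

theorem IsPerfectMatching.eq_of_mem (hM : IsPerfectMatching G M) {v : V} {e e' : Sym2 V}
    (he : e ∈ M) (hv : v ∈ e) (he' : e' ∈ M) (hv' : v ∈ e') : e = e' :=
  (hM.2 v).unique ⟨he, hv⟩ ⟨he', hv'⟩

theorem IsPerfectMatching.eq_of_subset (h₁ : IsPerfectMatching G M₁)
    (h₂ : IsPerfectMatching G M₂) (hsub : M₁ ⊆ M₂) : M₁ = M₂ := by
  refine hsub.antisymm fun e he => ?_
  induction e using Sym2.ind with
  | _ a b =>
    obtain ⟨e₁, ⟨he₁, ha⟩, -⟩ := h₁.2 a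
    rwa [← h₂.eq_of_mem (hsub he₁) ha he (Sym2.mem_mk_left a b)]

theorem IsPerfectMatching.isPerfectMatching_top (hM : IsPerfectMatching G M) :
    (⊤ : (fromEdgeSet (M : Set (Sym2 V))).Subgraph).IsPerfectMatching := by
  rw [Subgraph.isPerfectMatching_iff]
  intro v
  obtain ⟨e, ⟨he, hv⟩, -⟩ := hM.2 v
  obtain ⟨z, rfl⟩ : ∃ z, e = s(v, z) := ⟨_, (Sym2.other_spec hv).symm⟩
  refine ⟨z, ⟨he, G.ne_of_adj (hM.1 _ he)⟩, fun u hu => ?_⟩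
  exact Sym2.congr_right.mp (hM.eq_of_mem hu.1 (Sym2.mem_mk_left _ _) he hv)

def SimpleGraph.Walk.Absorbs {u v : V} (c : G.Walk u v) (M : Finset (Sym2 V)) : Prop :=
  ∀ e ∈ M, ∀ x ∈ e, x ∈ c.support → e ∈ c.edges

theorem SimpleGraph.Walk.Absorbs.mono {u v : V} {c : G.Walk u v} {M' : Finset (Sym2 V)}
    (h : c.Absorbs M') (hM : M ⊆ M') : c.Absorbs M :=
  fun e he => h e (hM he)

def symmDiffGraph (M₁ M₂ : Finset (Sym2 V)) : SimpleGraph V :=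
  fromEdgeSet (M₁ : Set (Sym2 V)) ∆ fromEdgeSet (M₂ : Set (Sym2 V))

theorem symmDiffGraph_adj {x y : V} :
    (symmDiffGraph M₁ M₂).Adj x y ↔ x ≠ y ∧ (s(x, y) ∈ M₁ ↔ s(x, y) ∉ M₂) := by
  simp only [symmDiffGraph, symmDiff_def, sup_adj, sdiff_adj, fromEdgeSet_adj, mem_coe]
  tauto

theorem mem_iff_notMem_of_mem_edgeSet_symmDiffGraph {e : Sym2 V}
    (he : e ∈ (symmDiffGraph M₁ M₂).edgeSet) : e ∈ M₁ ↔ e ∉ M₂ := by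
  induction e using Sym2.ind with
  | _ x y => exact (symmDiffGraph_adj.mp he).2

theorem symmDiffGraph_le (h₁ : IsPerfectMatching G M₁) (h₂ : IsPerfectMatching G M₂) :
    symmDiffGraph M₁ M₂ ≤ G := by
  intro x y hxy
  rw [symmDiffGraph_adj] at hxy
  by_cases h : s(x, y) ∈ M₁
  · exact h₁.1 _ h
  · exact h₂.1 _ (not_not.mp (mt hxy.2.mpr h))

theorem isCycles_symmDiffGraph (h₁ : IsPerfectMatching G M₁) (h₂ : IsPerfectMatching G M₂) :
    (symmDiffGraph M₁ M₂).IsCycles :=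
  h₁.isPerfectMatching_top.symmDiff_isCycles h₂.isPerfectMatching_top

/-- The `M₁`- and `M₂`-edges at `x` differ, since some edge of the symmetric difference meets `x`;
so both are edges of the symmetric difference. -/
theorem symmDiffGraph_adj_of_adj (h₁ : IsPerfectMatching G M₁) (h₂ : IsPerfectMatching G M₂)
    {x y z : V} (hxy : (symmDiffGraph M₁ M₂).Adj x y) (hxz : s(x, z) ∈ M₁ ∨ s(x, z) ∈ M₂) :
    (symmDiffGraph M₁ M₂).Adj x z := by
  rw [symmDiffGraph_adj] at hxy ⊢
  refine ⟨hxz.elim (fun h => G.ne_of_adj (h₁.1 _ h)) (fun h => G.ne_of_adj (h₂.1 _ h)),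
    fun hz₁ hz₂ => ?_, hxz.resolve_right⟩
  have hy₁ : s(x, y) ∈ M₁ → s(x, y) = s(x, z) := fun hy =>
    h₁.eq_of_mem hy (Sym2.mem_mk_left _ _) hz₁ (Sym2.mem_mk_left _ _)
  have hy₂ : s(x, y) ∈ M₂ → s(x, y) = s(x, z) := fun hy =>
    h₂.eq_of_mem hy (Sym2.mem_mk_left _ _) hz₂ (Sym2.mem_mk_left _ _)
  by_cases hy : s(x, y) ∈ M₁
  · exact hxy.2.mp hy (hy₁ hy ▸ hz₂)
  · exact hy (hy₂ (not_not.mp (mt hxy.2.mpr hy)) ▸ hz₁)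

theorem IsPerfectMatching.mem_iff_notMem_of_incident
    (h₁ : IsPerfectMatching G M₁) (h₂ : IsPerfectMatching G M₂) {x : V} {e e' : Sym2 V}
    (he : e ∈ (symmDiffGraph M₁ M₂).edgeSet) (he' : e' ∈ (symmDiffGraph M₁ M₂).edgeSet)
    (hx : x ∈ e) (hx' : x ∈ e') (hne : e ≠ e') : e ∈ M₁ ↔ e' ∉ M₁ := by
  refine ⟨fun h h' => hne (h₁.eq_of_mem h hx h' hx'), fun h' => ?_⟩
  by_contra h
  rw [mem_iff_notMem_of_mem_edgeSet_symmDiffGraph he, not_not] at h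
  rw [mem_iff_notMem_of_mem_edgeSet_symmDiffGraph he', not_not] at h'
  exact hne (h₂.eq_of_mem h hx h' hx')

theorem isChain_edges_symmDiffGraph (h₁ : IsPerfectMatching G M₁) (h₂ : IsPerfectMatching G M₂)
    {u v : V} (p : (symmDiffGraph M₁ M₂).Walk u v) (hp : p.edges.Nodup) :
    p.edges.IsChain (fun e e' => e ∈ M₁ ↔ e' ∉ M₁) := by
  have hne : p.darts.IsChain (fun d d' => d.edge ≠ d'.edge) :=
    (List.isChain_map Dart.edge).mp hp.isChain
  refine (List.isChain_map Dart.edge).mpr <|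
    List.isChain_iff_forall_rel_of_append_cons_cons.mpr fun d d' l₁ l₂ hl => ?_
  have hdd' : d.snd = d'.fst :=
    List.isChain_iff_forall_rel_of_append_cons_cons.mp p.isChain_dartAdj_darts hl
  exact h₁.mem_iff_notMem_of_incident h₂ d.edge_mem d'.edge_mem (Sym2.mem_mk_right _ _)
    (hdd' ▸ Sym2.mem_mk_left _ _) (List.isChain_iff_forall_rel_of_append_cons_cons.mp hne hl)

theorem exists_isCycle_symmDiffGraph [Finite V] (h₁ : IsPerfectMatching G M₁)
    (h₂ : IsPerfectMatching G M₂) (hne : M₁ ≠ M₂) :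
    ∃ (v : V) (p : (symmDiffGraph M₁ M₂).Walk v v), p.IsCycle := by
  obtain ⟨e, he₁, he₂⟩ : ∃ e ∈ M₁, e ∉ M₂ := by
    by_contra! h
    exact hne (h₁.eq_of_subset h₂ h)
  induction e using Sym2.ind with
  | _ a b =>
    have hab : (symmDiffGraph M₁ M₂).Adj a b :=
      symmDiffGraph_adj.mpr ⟨G.ne_of_adj (h₁.1 _ he₁), iff_of_true he₁ he₂⟩
    obtain ⟨p, hp, -⟩ := (isCycles_symmDiffGraph h₁ h₂)
      |>.exists_cycle_toSubgraph_verts_eq_connectedComponentSupp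
        (c := (symmDiffGraph M₁ M₂).connectedComponentMk a) rfl ⟨b, hab⟩
    exact ⟨a, p, hp⟩

section Decidable

variable [DecidableEq V]

theorem SimpleGraph.Walk.Absorbs.inter_sym2_support {u v : V} {c : G.Walk u v}
    (h : c.Absorbs M) : M ∩ c.support.toFinset.sym2 = c.edges.toFinset.filter (· ∈ M) := by
  ext e
  simp only [mem_inter, mem_filter, List.mem_toFinset, mem_sym2_iff]
  refine ⟨fun ⟨he, hS⟩ => ⟨h e he _ e.out_fst_mem (hS _ e.out_fst_mem), he⟩,
    fun ⟨hc, he⟩ => ⟨he, fun x hx => Walk.mem_support_of_mem_edges hc hx⟩⟩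

theorem existsUnique_mem_inter {T : Finset (Sym2 V)} {v : V} (hM : ∃! e, e ∈ M ∧ v ∈ e)
    (hT : ∀ e ∈ M, v ∈ e → e ∈ T) : ∃! e, e ∈ M ∩ T ∧ v ∈ e := by
  obtain ⟨e, ⟨he, hv⟩, huniq⟩ := hM
  exact ⟨e, ⟨mem_inter.mpr ⟨he, hT e he hv⟩, hv⟩,
    fun e' ⟨he', hv'⟩ => huniq e' ⟨(mem_inter.mp he').1, hv'⟩⟩

theorem existsUnique_mem_union {A B : Finset (Sym2 V)} {v : V} (hA : ∃! e, e ∈ A ∧ v ∈ e)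
    (hB : ∀ e ∈ B, v ∉ e) : ∃! e, e ∈ A ∪ B ∧ v ∈ e := by
  obtain ⟨e, ⟨he, hv⟩, huniq⟩ := hA
  refine ⟨e, ⟨mem_union_left _ he, hv⟩, fun e' ⟨he', hv'⟩ => ?_⟩
  rcases mem_union.mp he' with h | h
  · exact huniq e' ⟨h, hv'⟩
  · exact absurd hv' (hB e' h)

theorem matchWeight_union (w : Sym2 V → ℤ) {A B : Finset (Sym2 V)} (h : Disjoint A B) :
    matchWeight w (A ∪ B) = matchWeight w A + matchWeight w B :=
  sum_union h

variable [Fintype V] {S : Finset V}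

def NoEdgeCrosses (M : Finset (Sym2 V)) (S : Finset V) : Prop :=
  ∀ e ∈ M, e ∈ S.sym2 ∨ e ∈ Sᶜ.sym2

theorem Finset.disjoint_sym2_compl_sym2 (S : Finset V) : Disjoint S.sym2 Sᶜ.sym2 :=
  disjoint_left.mpr fun e h h' =>
    mem_compl.mp (mem_sym2_iff.mp h' _ e.out_fst_mem) (mem_sym2_iff.mp h _ e.out_fst_mem)

theorem SimpleGraph.Walk.Absorbs.noEdgeCrosses {u v : V} {c : G.Walk u v} (h : c.Absorbs M) :
    NoEdgeCrosses M c.support.toFinset := by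
  intro e he
  by_cases hx : ∃ x ∈ e, x ∈ c.support
  · obtain ⟨x, hxe, hx⟩ := hx
    exact .inl <| mem_sym2_iff.mpr fun y hy =>
      List.mem_toFinset.mpr (Walk.mem_support_of_mem_edges (h e he x hxe hx) hy)
  · push Not at hx
    exact .inr <| mem_sym2_iff.mpr fun y hy => by simpa using hx y hy

theorem IsPerfectMatching.inter_compl_sym2_union_inter_sym2 (h₁ : IsPerfectMatching G M₁)
    (h₂ : IsPerfectMatching G M₂) (hS₁ : NoEdgeCrosses M₁ S) (hS₂ : NoEdgeCrosses M₂ S) :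
    IsPerfectMatching G (M₁ ∩ Sᶜ.sym2 ∪ M₂ ∩ S.sym2) := by
  refine ⟨fun e he => ?_, fun v => ?_⟩
  · rcases mem_union.mp he with h | h
    exacts [h₁.1 e (mem_inter.mp h).1, h₂.1 e (mem_inter.mp h).1]
  by_cases hv : v ∈ S
  · have hout : ∀ e ∈ Sᶜ.sym2, v ∉ e := fun e h hve => mem_compl.mp (mem_sym2_iff.mp h v hve) hv
    rw [union_comm]
    exact existsUnique_mem_union
      (existsUnique_mem_inter (h₂.2 v) fun e he hve => (hS₂ e he).resolve_right (hout e · hve))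
      fun e he => hout e (mem_inter.mp he).2
  · have hin : ∀ e ∈ S.sym2, v ∉ e := fun e h hve => hv (mem_sym2_iff.mp h v hve)
    exact existsUnique_mem_union
      (existsUnique_mem_inter (h₁.2 v) fun e he hve => (hS₁ e he).resolve_left (hin e · hve))
      fun e he => hin e (mem_inter.mp he).2

theorem isNiceCycle_of_noEdgeCrosses {v : V} {c : G.Walk v v} (hM : IsPerfectMatching G M)
    (hc : NoEdgeCrosses M c.support.toFinset) : IsNiceCycle G c := by
  refine ⟨M ∩ c.support.toFinsetᶜ.sym2, fun e he => hM.1 e (mem_inter.mp he).1,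
    fun e he u hu => ?_, fun u hu => existsUnique_mem_inter (hM.2 u) fun e he hue => ?_⟩
  · simpa using mem_sym2_iff.mp (mem_inter.mp he).2 u hu
  · exact (hc e he).resolve_left fun h => hu (by simpa using mem_sym2_iff.mp h u hue)

theorem NoEdgeCrosses.matchWeight_eq (w : Sym2 V → ℤ) (hS : NoEdgeCrosses M S) :
    matchWeight w M = matchWeight w (M ∩ S.sym2) + matchWeight w (M ∩ Sᶜ.sym2) := by
  have hM : M ∩ S.sym2 ∪ M ∩ Sᶜ.sym2 = M := by
    rw [← inter_union_distrib_left, inter_eq_left]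
    exact fun e he => mem_union.mpr (hS e he)
  rw [← matchWeight_union, hM]
  exact S.disjoint_sym2_compl_sym2.mono inter_subset_right inter_subset_right

theorem matchWeight_inter_sym2_le_of_isMin (w : Sym2 V → ℤ) (h₁ : IsPerfectMatching G M₁)
    (h₂ : IsPerfectMatching G M₂) (hS₁ : NoEdgeCrosses M₁ S) (hS₂ : NoEdgeCrosses M₂ S)
    (hmin : ∀ M, IsPerfectMatching G M → matchWeight w M₁ ≤ matchWeight w M) :
    matchWeight w (M₁ ∩ S.sym2) ≤ matchWeight w (M₂ ∩ S.sym2) := by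
  have hle := hmin _ (h₁.inter_compl_sym2_union_inter_sym2 h₂ hS₁ hS₂)
  rw [hS₁.matchWeight_eq w, matchWeight_union w
    (S.disjoint_sym2_compl_sym2.symm.mono inter_subset_right inter_subset_right)] at hle
  linarith

theorem SimpleGraph.Walk.IsCycle.absorbs_union (h₁ : IsPerfectMatching G M₁)
    (h₂ : IsPerfectMatching G M₂) {v : V} {p : (symmDiffGraph M₁ M₂).Walk v v}
    (hp : p.IsCycle) : p.Absorbs (M₁ ∪ M₂) := by
  classical
  intro e he x hxe hx
  obtain ⟨z, rfl⟩ : ∃ z, e = s(x, z) := ⟨_, (Sym2.other_spec hxe).symm⟩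
  obtain ⟨y, hy⟩ : (p.toSubgraph.neighborSet x).Nonempty :=
    Set.nonempty_of_ncard_ne_zero (by simp [hp.ncard_neighborSet_toSubgraph_eq_two hx])
  rw [← Walk.adj_toSubgraph_iff_mem_edges, hp.adj_toSubgraph_iff_of_isCycles
    (isCycles_symmDiffGraph h₁ h₂) (p.mem_verts_toSubgraph.mpr hx)]
  exact symmDiffGraph_adj_of_adj h₁ h₂ hy.adj_sub (mem_union.mp he)

theorem exists_isCycle_absorbs_of_ne (h₁ : IsPerfectMatching G M₁)
    (h₂ : IsPerfectMatching G M₂) (hne : M₁ ≠ M₂) :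
    ∃ (v : V) (c : G.Walk v v), c.IsCycle ∧ c.Absorbs M₁ ∧ c.Absorbs M₂ ∧
      (∀ e ∈ c.edges, e ∈ M₂ ↔ e ∉ M₁) ∧ c.edges.IsChain (fun e e' => e ∈ M₁ ↔ e' ∉ M₁) := by
  obtain ⟨v, p, hp⟩ := exists_isCycle_symmDiffGraph h₁ h₂ hne
  have hle := symmDiffGraph_le h₁ h₂
  have hc : (p.mapLe hle).Absorbs (M₁ ∪ M₂) := by
    simpa [Walk.Absorbs, Walk.support_mapLe_eq_support, Walk.edges_mapLe_eq_edges]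
      using hp.absorbs_union h₁ h₂
  refine ⟨v, p.mapLe hle, hp.mapLe hle, hc.mono subset_union_left, hc.mono subset_union_right,
    fun e he => ?_, ?_⟩
  · rw [Walk.edges_mapLe_eq_edges] at he
    have := mem_iff_notMem_of_mem_edgeSet_symmDiffGraph (p.edges_subset_edgeSet he)
    tauto
  · rw [Walk.edges_mapLe_eq_edges]
    exact isChain_edges_symmDiffGraph h₁ h₂ p hp.edges_nodup

end Decidable

end

theorem isolating_of_nice_cycles_nonzero_circulation_general {V : Type*} [Fintype V]
    (G : SimpleGraph V) (w : Sym2 V → ℤ)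
    (hcirc : ∀ (v : V) (c : G.Walk v v), c.IsCycle → IsNiceCycle G c →
      circulation w c.edges ≠ 0) :
    ∀ M₁ M₂ : Finset (Sym2 V), IsPerfectMatching G M₁ → IsPerfectMatching G M₂ →
      (∀ M, IsPerfectMatching G M → matchWeight w M₁ ≤ matchWeight w M) →
      (∀ M, IsPerfectMatching G M → matchWeight w M₂ ≤ matchWeight w M) →
      M₁ = M₂ := by
  classical
  intro M₁ M₂ h₁ h₂ hmin₁ hmin₂
  by_contra hne
  obtain ⟨v, c, hc, hc₁, hc₂, hedges, hchain⟩ := exists_isCycle_absorbs_of_ne h₁ h₂ hne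
  have hS₁ := hc₁.noEdgeCrosses
  have hS₂ := hc₂.noEdgeCrosses
  have hweight := le_antisymm (matchWeight_inter_sym2_le_of_isMin w h₁ h₂ hS₁ hS₂ hmin₁)
    (matchWeight_inter_sym2_le_of_isMin w h₂ h₁ hS₂ hS₁ hmin₂)
  refine hcirc v c hc (isNiceCycle_of_noEdgeCrosses h₁ hS₁) ?_
  rw [hc₁.inter_sym2_support, hc₂.inter_sym2_support, matchWeight, matchWeight] at hweight
  rw [circulation, abs_altSum_map_eq w hc.edges_nodup hchain, abs_eq_zero, sub_eq_zero, hweight]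
  exact sum_congr (filter_congr fun e he => hedges e (List.mem_toFinset.mp he)) fun _ _ => rfl

/-- If `G` has a perfect matching and `w` is a weight function giving nonzero circulation
to every nice cycle of `G`, then the minimum weight perfect matching is unique, i.e.
`w` is isolating for `G`. -/
theorem isolating_of_nice_cycles_nonzero_circulation {V : Type*} [Fintype V] [DecidableEq V]
    (G : SimpleGraph V) (w : Sym2 V → ℤ)
    (hpm : ∃ M, IsPerfectMatching G M)
    (hcirc : ∀ (v : V) (c : G.Walk v v), c.IsCycle → IsNiceCycle G c →
      circulation w c.edges ≠ 0) :
    ∀ M₁ M₂ : Finset (Sym2 V), IsPerfectMatching G M₁ → IsPerfectMatching G M₂ →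
      (∀ M, IsPerfectMatching G M → matchWeight w M₁ ≤ matchWeight w M) →
      (∀ M, IsPerfectMatching G M → matchWeight w M₂ ≤ matchWeight w M) →
      M₁ = M₂ :=
  isolating_of_nice_cycles_nonzero_circulation_general G w hcirc
end

section
/- Let G be a graph with n nodes whose edges are enumerated e_1, e_2, ..., e_m, let s ≥ 1 be an integer with n²s ≥ 7, and define the weight function w by w(e_i) = 2^{i−1}. Then for any s even cycles C_1, ..., C_s in G, there exists an integer j with 2 ≤ j ≤ n²s such that c_w(C_i) is not divisible by j for every 1 ≤ i ≤ s; consequently the weight function e_i ↦ (2^{i−1} mod j), whose values are bounded by n²s, gives nonzero circulation to each of C_1, ..., C_s. -/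
open Finset

section SignedPowersOfTwo

variable {ι : Type*} {s : Finset ι} {b : ι → ℕ} {ε : ι → ℤ}

lemma abs_sum_sign_mul_two_pow_lt (hb : Set.InjOn b s) (hε : ∀ i ∈ s, |ε i| = 1) {m : ℕ}
    (hm : ∀ i ∈ s, b i < m) : |∑ i ∈ s, ε i * 2 ^ b i| < 2 ^ m := by
  classical
  calc |∑ i ∈ s, ε i * 2 ^ b i| ≤ ∑ i ∈ s, |ε i * 2 ^ b i| := abs_sum_le_sum_abs _ _
    _ = ((∑ k ∈ s.image b, 2 ^ k : ℕ) : ℤ) := by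
      rw [sum_image hb]
      push_cast
      exact sum_congr rfl fun i hi => by simp [abs_mul, hε i hi]
    _ < 2 ^ m := by exact_mod_cast Nat.geomSum_lt le_rfl (by simpa using hm)

lemma sum_sign_mul_two_pow_ne_zero (hb : Set.InjOn b s) (hε : ∀ i ∈ s, |ε i| = 1)
    (hs : s.Nonempty) : ∑ i ∈ s, ε i * 2 ^ b i ≠ 0 := by
  classical
  obtain ⟨i₀, hi₀, hmax⟩ := exists_max_image s b hs
  have hlt : ∀ i ∈ s.erase i₀, b i < b i₀ := fun i hi =>
    (hmax i (mem_of_mem_erase hi)).lt_of_ne fun h =>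
      ne_of_mem_erase hi (hb (mem_of_mem_erase hi) hi₀ h)
  have hrest : |∑ i ∈ s.erase i₀, ε i * 2 ^ b i| < 2 ^ b i₀ :=
    abs_sum_sign_mul_two_pow_lt (hb.mono (erase_subset i₀ s))
      (fun i hi => hε i (mem_of_mem_erase hi)) hlt
  rw [← add_sum_erase s _ hi₀]
  intro h
  rw [eq_neg_of_add_eq_zero_right h, abs_neg, abs_mul, hε i₀ hi₀] at hrest
  simp at hrest

end SignedPowersOfTwo

lemma altSum_map {α : Type*} (f : α → ℤ) (l : List α) :
    altSum (l.map f) = ∑ i : Fin l.length, (-1) ^ (i : ℕ) * f l[i] := by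
  induction l with
  | nil => simp [altSum]
  | cons a l ih =>
    simp [altSum, ih, Fin.sum_univ_succ, pow_succ, sum_neg_distrib, sub_eq_add_neg]

lemma altSum_map_emod_modEq (l : List ℤ) (j : ℤ) :
    altSum (l.map (· % j)) ≡ altSum l [ZMOD j] := by
  induction l with
  | nil => rfl
  | cons a l ih => exact (Int.mod_modEq a j).sub ih

lemma circulation_emod_ne_zero {V : Type*} {w : Sym2 V → ℤ} {j : ℤ} {l : List (Sym2 V)}
    (h : ¬ j ∣ altSum (l.map w)) : circulation (fun e => w e % j) l ≠ 0 := by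
  intro h0
  rw [circulation, abs_eq_zero] at h0
  have := altSum_map_emod_modEq (l.map w) j
  rw [List.map_map, Function.comp_def, h0] at this
  exact h (by simpa using this.dvd)

section AltSumTwoPow

variable {α : Type*} {l : List α} {num : α → ℕ}

lemma List.Nodup.injective_comp_getElem (hl : l.Nodup) (hnum : Set.InjOn num {e | e ∈ l}) :
    Function.Injective fun i : Fin l.length => num l[i] :=
  fun _ _ h => Fin.ext <| hl.getElem_inj_iff.1 <| hnum (List.getElem_mem _) (List.getElem_mem _) h

lemma altSum_map_two_pow_ne_zero (hl : l.Nodup) (hnum : Set.InjOn num {e | e ∈ l})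
    (hne : l ≠ []) : altSum (l.map fun e => (2 : ℤ) ^ num e) ≠ 0 := by
  rw [altSum_map]
  exact sum_sign_mul_two_pow_ne_zero (hl.injective_comp_getElem hnum).injOn (by simp)
    (univ_nonempty_iff.2 ⟨⟨0, List.length_pos_iff.2 hne⟩⟩)

lemma abs_altSum_map_two_pow_lt (hl : l.Nodup) (hnum : Set.InjOn num {e | e ∈ l}) {m : ℕ}
    (hm : ∀ e ∈ l, num e < m) : |altSum (l.map fun e => (2 : ℤ) ^ num e)| < 2 ^ m := by
  rw [altSum_map]
  exact abs_sum_sign_mul_two_pow_lt (hl.injective_comp_getElem hnum).injOn (by simp)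
    fun i _ => hm _ (List.getElem_mem _)

end AltSumTwoPow

lemma Nat.centralBinom_dvd_of_forall_dvd {k P : ℕ} (hP : P ≠ 0)
    (h : ∀ j, 2 ≤ j → j ≤ 2 * k → j ∣ P) : k.centralBinom ∣ P := by
  refine (Nat.factorization_prime_le_iff_dvd (centralBinom_pos k).ne' hP).1 fun p hp => ?_
  rcases Nat.eq_zero_or_pos (k.centralBinom.factorization p) with ht | ht
  · simp [ht]
  have hk : 0 < 2 * k := by
    rcases k with _ | k
    · simp at ht
    · omega
  have hle : p ^ k.centralBinom.factorization p ≤ 2 * k := Nat.pow_factorization_choose_le hk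
  exact (hp.pow_dvd_iff_le_factorization hP).1
    (h _ (hp.two_le.trans (Nat.le_self_pow ht.ne' p)) hle)

lemma exists_not_dvd_of_mul_prod_lt {ι : Type*} [Fintype ι] {d : ι → ℕ} {N : ℕ}
    (hd : ∀ i, d i ≠ 0) (hN : 2 ≤ N) (h : N * ∏ i, d i < 4 ^ (N / 2)) :
    ∃ j, 2 ≤ j ∧ j ≤ N ∧ ∀ i, ¬ j ∣ d i := by
  by_contra! hcon
  have hP : ∏ i, d i ≠ 0 := prod_ne_zero_iff.2 fun i _ => hd i
  have hdvd : (N / 2).centralBinom ∣ ∏ i, d i :=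
    Nat.centralBinom_dvd_of_forall_dvd hP fun j hj2 hjN =>
      let ⟨i, hi⟩ := hcon j hj2 (by omega)
      hi.trans (dvd_prod_of_mem d (mem_univ i))
  refine h.not_ge ?_
  calc 4 ^ (N / 2) ≤ 2 * (N / 2) * (N / 2).centralBinom :=
        Nat.four_pow_le_two_mul_self_mul_centralBinom _ (by omega)
    _ ≤ N * ∏ i, d i := Nat.mul_le_mul (Nat.mul_div_le N 2) (Nat.le_of_dvd (by positivity) hdvd)

lemma mul_two_pow_lt_four_pow_div_two {N a : ℕ} (h : 2 * a + 3 ≤ N) :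
    N * 2 ^ a < 4 ^ (N / 2) := by
  set t := N - 1 - a
  have hN : N < 2 ^ t := by
    have h1 : t - 1 < 2 ^ (t - 1) := Nat.lt_two_pow_self
    have h2 : 2 ^ t = 2 * 2 ^ (t - 1) := by rw [← pow_succ']; congr 1; omega
    omega
  calc N * 2 ^ a < 2 ^ t * 2 ^ a := Nat.mul_lt_mul_of_pos_right hN (by positivity)
    _ = 2 ^ (N - 1) := by rw [← pow_add]; congr 1; omega
    _ ≤ 2 ^ (2 * (N / 2)) := Nat.pow_le_pow_right two_pos (by omega)
    _ = 4 ^ (N / 2) := by rw [pow_mul]; norm_num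

lemma SimpleGraph.two_mul_card_edgeFinset_le {V : Type*} [Fintype V] (G : SimpleGraph V)
    [Fintype G.edgeSet] : 2 * #G.edgeFinset ≤ Fintype.card V * (Fintype.card V - 1) := by
  have := G.card_edgeFinset_le_card_choose_two
  rw [Nat.choose_two_right] at this
  have := Nat.div_mul_le_self (Fintype.card V * (Fintype.card V - 1)) 2
  omega

lemma two_mul_mul_add_three_le {n m s : ℕ} (hm : 2 * m ≤ n * (n - 1)) (h7 : 7 ≤ n ^ 2 * s) :
    2 * (m * s) + 3 ≤ n ^ 2 * s := by
  have hs : 0 < s := Nat.pos_of_ne_zero (by rintro rfl; simp at h7)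
  have hns : 3 ≤ n * s := by
    by_contra! h
    have hn : n ≤ 2 := by nlinarith
    nlinarith
  have h1 : 2 * (m * s) ≤ n * (n - 1) * s := by nlinarith
  have h2 : n * (n - 1) * s + n * s = n ^ 2 * s := by
    rcases n with _ | n
    · simp
    · rw [Nat.add_sub_cancel]; ring
  omega

theorem small_weights_nonzero_circulation_general {V : Type*} [Fintype V]
    (G : SimpleGraph V) [DecidableRel G.Adj]
    (num : Sym2 V → ℕ)
    (hinj : Set.InjOn num G.edgeSet)
    (hlt : ∀ e ∈ G.edgeSet, num e < G.edgeFinset.card)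
    (s : ℕ)
    (h7 : 7 ≤ (Fintype.card V) ^ 2 * s)
    (C : Fin s → Σ v : V, G.Walk v v)
    (hcyc : ∀ i, (C i).2.IsCycle) :
    ∃ j : ℕ, 2 ≤ j ∧ j ≤ (Fintype.card V) ^ 2 * s ∧
      ∀ i : Fin s,
        ¬ ((j : ℤ) ∣ altSum ((C i).2.edges.map fun e => (2 : ℤ) ^ num e)) ∧
        circulation (fun e => ((2 : ℤ) ^ num e) % (j : ℤ)) (C i).2.edges ≠ 0 := by
  set n := Fintype.card V
  set m := #G.edgeFinset
  set d : Fin s → ℤ := fun i => altSum ((C i).2.edges.map fun e => (2 : ℤ) ^ num e)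
  have hsub (i : Fin s) : ∀ ⦃e⦄, e ∈ (C i).2.edges → e ∈ G.edgeSet :=
    (C i).2.edges_subset_edgeSet
  have hd_ne (i : Fin s) : d i ≠ 0 :=
    altSum_map_two_pow_ne_zero (hcyc i).edges_nodup (hinj.mono (hsub i))
      (mt SimpleGraph.Walk.edges_eq_nil.1 (hcyc i).not_nil)
  have hd_lt (i : Fin s) : (d i).natAbs < 2 ^ m := by
    have := abs_altSum_map_two_pow_lt (hcyc i).edges_nodup (hinj.mono (hsub i))
      fun e he => hlt e (hsub i he)
    rw [Int.abs_eq_natAbs] at this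
    exact_mod_cast this
  have hsize : 2 * (m * s) + 3 ≤ n ^ 2 * s :=
    two_mul_mul_add_three_le G.two_mul_card_edgeFinset_le h7
  have hprod : ∏ i, (d i).natAbs ≤ 2 ^ (m * s) := by
    rw [pow_mul]
    exact (prod_le_pow_card _ _ _ fun i _ => (hd_lt i).le).trans_eq (by simp)
  obtain ⟨j, hj2, hjN, hj⟩ :=
    exists_not_dvd_of_mul_prod_lt (fun i => Int.natAbs_ne_zero.2 (hd_ne i)) (by omega) <|
      (Nat.mul_le_mul_left _ hprod).trans_lt (mul_two_pow_lt_four_pow_div_two hsize)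
  have hj' (i : Fin s) : ¬ (j : ℤ) ∣ d i := by rw [Int.natCast_dvd]; exact hj i
  exact ⟨j, hj2, hjN, fun i => ⟨hj' i, circulation_emod_ne_zero (hj' i)⟩⟩

/-- Let `G` be a graph with `n` nodes whose edges are enumerated `e₁, …, e_m`
(here via an injective numbering `num` of the edges with values `< m`), let `s ≥ 1`
with `n²s ≥ 7`, and give edge `eᵢ` the weight `2^(i-1)`.  Then for any `s` even cycles
`C₁, …, C_s` of `G` there is a modulus `2 ≤ j ≤ n²s` such that no circulation
`c_w(Cᵢ)` is divisible by `j`; consequently the weight function `eᵢ ↦ 2^(i-1) mod j`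
(whose values are bounded by `n²s`) gives nonzero circulation to each `Cᵢ`. -/
theorem small_weights_nonzero_circulation {V : Type*} [Fintype V] [DecidableEq V]
    (G : SimpleGraph V) [DecidableRel G.Adj]
    (num : Sym2 V → ℕ)
    (hinj : Set.InjOn num G.edgeSet)
    (hlt : ∀ e ∈ G.edgeSet, num e < G.edgeFinset.card)
    (s : ℕ) (hs : 1 ≤ s)
    (h7 : 7 ≤ (Fintype.card V) ^ 2 * s)
    (C : Fin s → Σ v : V, G.Walk v v)
    (hcyc : ∀ i, (C i).2.IsCycle)
    (heven : ∀ i, Even (C i).2.length) :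
    ∃ j : ℕ, 2 ≤ j ∧ j ≤ (Fintype.card V) ^ 2 * s ∧
      ∀ i : Fin s,
        ¬ ((j : ℤ) ∣ altSum ((C i).2.edges.map fun e => (2 : ℤ) ^ num e)) ∧
        circulation (fun e => ((2 : ℤ) ^ num e) % (j : ℤ)) (C i).2.edges ≠ 0 :=
  small_weights_nonzero_circulation_general G num hinj hlt s h7 C hcyc
end

section
/- Let G(V,E) be a bipartite graph that has a perfect matching, with an integer weight function w on its edges, and let C be an even cycle in G with nonzero circulation c_w(C) ≠ 0. Let E_1 ⊆ E be the union of all perfect matchings of G of minimum w-weight. Then the subgraph G_1(V, E_1) does not contain the cycle C; equivalently, if every edge of an even cycle C of G lies in some minimum w-weight perfect matching of G, then c_w(C) = 0. -/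
/-!
Split the edges of the even closed walk alternately into `H` and `L`; every vertex meets `H`
and `L` equally often. If each edge of `H` lies in a perfect matching of minimum weight `μ`, the
sum of these matchings is a `|H|`-regular multigraph of weight `|H| μ` containing `H`. Replacing
`H` by `L` in it gives another `|H|`-regular bipartite multigraph; by Hall's theorem such a
multigraph is a sum of `|H|` perfect matchings, so its weight `|H| μ - w(H) + w(L)` is at least
`|H| μ`. Hence `w(H) ≤ w(L)`, symmetrically `w(L) ≤ w(H)`, and the circulation
`|w(H) - w(L)|` vanishes.
-/

open Finset

section

variable {V : Type*}

def IsBipartitionSide (G : SimpleGraph V) (A : Finset V) : Prop :=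
  ∀ ⦃u v⦄, G.Adj u v → (u ∈ A ↔ v ∉ A)

lemma SimpleGraph.Colorable.exists_isBipartitionSide [Fintype V] {G : SimpleGraph V}
    (h : G.Colorable 2) : ∃ A : Finset V, IsBipartitionSide G A := by
  obtain ⟨col⟩ := h
  refine ⟨({v | col v = 0} : Finset V), fun u v huv => ?_⟩
  have := col.valid huv
  simp only [Finset.mem_filter, Finset.mem_univ, true_and]
  omega

lemma IsBipartitionSide.compl [Fintype V] [DecidableEq V] {G : SimpleGraph V} {A : Finset V}
    (hA : IsBipartitionSide G A) : IsBipartitionSide G Aᶜ := fun u v h => by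
  simpa [not_iff_not] using (hA h).not

variable [DecidableEq V]

lemma IsBipartitionSide.card_filter_mem_eq_one {G : SimpleGraph V} {A : Finset V}
    (hA : IsBipartitionSide G A) {e : Sym2 V} (he : e ∈ G.edgeSet) :
    #{x ∈ A | x ∈ e} = 1 := by
  induction e using Sym2.ind with
  | h u v =>
    have huv := hA he
    rw [Finset.card_eq_one]
    by_cases hu : u ∈ A
    · exact ⟨u, by ext x; simp only [mem_filter, Sym2.mem_iff, mem_singleton]; grind⟩
    · exact ⟨v, by ext x; simp only [mem_filter, Sym2.mem_iff, mem_singleton]; grind⟩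

def multiDegree (S : Multiset (Sym2 V)) (x : V) : ℕ := S.countP (x ∈ ·)

lemma multiDegree_add (S T : Multiset (Sym2 V)) (x : V) :
    multiDegree (S + T) x = multiDegree S x + multiDegree T x :=
  Multiset.countP_add _ _ _

lemma IsPerfectMatching.multiDegree_eq_one {G : SimpleGraph V} {M : Finset (Sym2 V)}
    (hM : IsPerfectMatching G M) (x : V) : multiDegree M.val x = 1 := by
  obtain ⟨e, he, huniq⟩ := hM.2 x
  rw [multiDegree, Multiset.countP_eq_card_filter, ← Finset.filter_val, Finset.card_val,
    Finset.card_eq_one]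
  exact ⟨e, Finset.eq_singleton_iff_unique_mem.2 ⟨Finset.mem_filter.2 he,
    fun e' he' => huniq e' (Finset.mem_filter.1 he')⟩⟩

lemma sum_multiDegree (X : Finset V) (S : Multiset (Sym2 V)) :
    ∑ x ∈ X, multiDegree S x = (S.map fun e => #{x ∈ X | x ∈ e}).sum := by
  induction S using Multiset.induction with
  | empty => simp [multiDegree]
  | cons e S ih =>
    simp only [multiDegree, Multiset.countP_cons, Multiset.map_cons, Multiset.sum_cons,
      Finset.sum_add_distrib, Finset.card_filter] at ih ⊢
    rw [ih, add_comm]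

lemma card_le_card_of_regular {S : Multiset (Sym2 V)} {k : ℕ} (hk : 0 < k)
    (hreg : ∀ x, multiDegree S x = k) {X Y : Finset V}
    (hXY : ∀ e ∈ S, #{x ∈ X | x ∈ e} ≤ #{y ∈ Y | y ∈ e}) : #X ≤ #Y := by
  have hsum (Z : Finset V) : #Z * k = (S.map fun e => #{z ∈ Z | z ∈ e}).sum := by
    simp [← sum_multiDegree, hreg]
  exact Nat.le_of_mul_le_mul_right
    ((hsum X).trans_le ((Multiset.sum_map_le_sum_map _ _ hXY).trans (hsum Y).ge)) hk

namespace IsBipartitionSide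

variable [Fintype V] {G : SimpleGraph V} {A : Finset V} {S : Multiset (Sym2 V)} {k : ℕ}

lemma card_compl_le (hA : IsBipartitionSide G A) (hSG : ∀ e ∈ S, e ∈ G.edgeSet) (hk : 0 < k)
    (hreg : ∀ x, multiDegree S x = k) : #Aᶜ ≤ #A :=
  card_le_card_of_regular hk hreg fun e he => by
    rw [hA.compl.card_filter_mem_eq_one (hSG e he), hA.card_filter_mem_eq_one (hSG e he)]

lemma exists_injective_of_regular (hA : IsBipartitionSide G A) (hSG : ∀ e ∈ S, e ∈ G.edgeSet)
    (hk : 0 < k) (hreg : ∀ x, multiDegree S x = k) :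
    ∃ f : A → V, Function.Injective f ∧ ∀ a : A, s(↑a, f a) ∈ S := by
  refine (Fintype.all_card_le_filter_rel_iff_exists_injective
    (fun (a : A) b => s(↑a, b) ∈ S)).1 fun T => ?_
  rw [← Finset.card_map (Function.Embedding.subtype _)]
  -- Hall's condition: an edge meeting `T` has its other endpoint among the neighbours of `T`.
  refine card_le_card_of_regular hk hreg fun e he => ?_
  by_cases hTe : ∃ a ∈ T, ↑a ∈ e
  · obtain ⟨a, haT, hae⟩ := hTe
    calc #{x ∈ T.map (Function.Embedding.subtype _) | x ∈ e}
        ≤ #{x ∈ A | x ∈ e} := card_le_card (filter_subset_filter _ (by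
          intro x
          simp only [mem_map, Function.Embedding.coe_subtype]
          rintro ⟨b, -, rfl⟩
          exact b.2))
      _ = 1 := hA.card_filter_mem_eq_one (hSG e he)
      _ ≤ _ := card_pos.2 ⟨Sym2.Mem.other hae, mem_filter.2
          ⟨mem_filter.2 ⟨mem_univ _, a, haT, by rwa [Sym2.other_spec]⟩, Sym2.other_mem hae⟩⟩
  · rw [card_eq_zero.2 (filter_eq_empty_iff.2 ?_)]
    · exact Nat.zero_le _
    · simp only [mem_map, Function.Embedding.coe_subtype]
      rintro _ ⟨a, haT, rfl⟩ hae
      exact hTe ⟨a, haT, hae⟩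

lemma isPerfectMatching_image (hA : IsBipartitionSide G A) {f : A → V}
    (hf : Function.Injective f) (hadj : ∀ a : A, G.Adj a (f a)) (hcard : #Aᶜ ≤ #A) :
    IsPerfectMatching G (univ.image fun a : A => s(↑a, f a)) := by
  have hfA (a : A) : f a ∉ A := (hA (hadj a)).1 a.2
  have hrange : univ.image f = Aᶜ := eq_of_subset_of_card_le
    (fun v hv => by obtain ⟨a, -, rfl⟩ := mem_image.1 hv; simpa using hfA a)
    (by rwa [card_image_of_injective _ hf, card_univ, Fintype.card_coe])
  refine ⟨fun e he => ?_, fun v => ?_⟩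
  · obtain ⟨a, -, rfl⟩ := mem_image.1 he
    exact hadj a
  by_cases hv : v ∈ A
  · refine ⟨s(v, f ⟨v, hv⟩),
      ⟨mem_image_of_mem _ (mem_univ (⟨v, hv⟩ : A)), Sym2.mem_mk_left _ _⟩, ?_⟩
    rintro _ ⟨he, hve⟩
    obtain ⟨a, -, rfl⟩ := mem_image.1 he
    rcases Sym2.mem_iff.1 hve with rfl | rfl
    · rfl
    · exact absurd hv (hfA a)
  · obtain ⟨a, -, rfl⟩ := mem_image.1 (hrange ▸ mem_compl.2 hv : v ∈ univ.image f)
    refine ⟨s(↑a, f a), ⟨mem_image_of_mem _ (mem_univ a), Sym2.mem_mk_right _ _⟩, ?_⟩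
    rintro _ ⟨he, hve⟩
    obtain ⟨b, -, rfl⟩ := mem_image.1 he
    rcases Sym2.mem_iff.1 hve with h | h
    · exact absurd (h ▸ b.2) hv
    · rw [hf h]

lemma exists_isPerfectMatching_le (hA : IsBipartitionSide G A) (hSG : ∀ e ∈ S, e ∈ G.edgeSet)
    (hreg : ∀ x, multiDegree S x = k + 1) : ∃ M, IsPerfectMatching G M ∧ M.val ≤ S := by
  obtain ⟨f, hf, hfS⟩ := hA.exists_injective_of_regular hSG k.succ_pos hreg
  refine ⟨_, hA.isPerfectMatching_image hf (fun a => hSG _ (hfS a))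
    (hA.card_compl_le hSG k.succ_pos hreg), ?_⟩
  rw [Multiset.le_iff_subset (Finset.nodup _)]
  intro e he
  obtain ⟨a, -, rfl⟩ := mem_image.1 he
  exact hfS a

lemma mul_le_sum_map_of_regular (hA : IsBipartitionSide G A) {w : Sym2 V → ℤ} {μ : ℤ}
    (hμ : ∀ M, IsPerfectMatching G M → μ ≤ matchWeight w M)
    (hSG : ∀ e ∈ S, e ∈ G.edgeSet) (hreg : ∀ x, multiDegree S x = k) : k * μ ≤ (S.map w).sum := by
  induction k generalizing S with
  | zero =>
    have : S = 0 := Multiset.eq_zero_of_forall_notMem fun e he =>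
      Multiset.countP_eq_zero.1 (hreg e.out.1) e he (Sym2.out_fst_mem e)
    simp [this]
  | succ k ih =>
    obtain ⟨M, hM, hMS⟩ := hA.exists_isPerfectMatching_le hSG hreg
    obtain ⟨T, rfl⟩ := Multiset.le_iff_exists_add.1 hMS
    have hT := ih (fun e he => hSG e (Multiset.mem_add.2 (Or.inr he))) fun x => by
      have := hreg x
      rw [multiDegree_add, hM.multiDegree_eq_one] at this
      omega
    have hMw : (M.val.map w).sum = matchWeight w M := rfl
    rw [Multiset.map_add, Multiset.sum_add, hMw]
    push_cast
    linarith [hμ M hM]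

end IsBipartitionSide

namespace List

variable {α : Type*}

def evens : List α → List α
  | [] => []
  | [a] => [a]
  | a :: _ :: l => a :: evens l

def odds (l : List α) : List α := l.tail.evens

@[simp] lemma evens_nil : ([] : List α).evens = [] := rfl

@[simp] lemma odds_nil : ([] : List α).odds = [] := rfl

@[simp] lemma evens_cons (a : α) (l : List α) : (a :: l).evens = a :: l.odds := by
  cases l <;> rfl

@[simp] lemma odds_cons (a : α) (l : List α) : (a :: l).odds = l.evens := rfl

theorem evens_sublist : ∀ l : List α, l.evens <+ l
  | [] => .slnil
  | [_] => .refl _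
  | a :: b :: l => ((evens_sublist l).cons b).cons_cons a

theorem odds_sublist (l : List α) : l.odds <+ l :=
  l.tail.evens_sublist.trans (tail_sublist l)

lemma altSum_map (f : α → ℤ) (l : List α) :
    altSum (l.map f) = (l.evens.map f).sum - (l.odds.map f).sum := by
  induction l with
  | nil => rfl
  | cons a l ih =>
    simp only [map_cons, altSum, ih, evens_cons, odds_cons, sum_cons]
    ring

end List

namespace SimpleGraph.Walk

variable {G : SimpleGraph V}

lemma multiDegree_evens_sub_odds {u v : V} (p : G.Walk u v) (x : V) :
    (multiDegree ↑p.edges.evens x : ℤ) - multiDegree ↑p.edges.odds x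
      = (if x = u then 1 else 0) - (-1) ^ p.length * (if x = v then 1 else 0) := by
  induction p with
  | nil => simp [multiDegree]
  | @cons u u' v h p ih =>
    have hne : u ≠ u' := h.ne
    simp only [edges_cons, List.evens_cons, List.odds_cons, length_cons, multiDegree,
      ← Multiset.cons_coe, Multiset.countP_cons] at ih ⊢
    have hmem : ((if x ∈ s(u, u') then 1 else 0 : ℕ) : ℤ)
        = (if x = u then 1 else 0) + (if x = u' then 1 else 0) := by
      by_cases hu : x = u <;> by_cases hu' : x = u' <;> simp_all
    push_cast at hmem ⊢
    rw [hmem, pow_succ]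
    linarith

lemma multiDegree_evens_eq_odds {u : V} (p : G.Walk u u) (h : Even p.length) (x : V) :
    multiDegree ↑p.edges.evens x = multiDegree ↑p.edges.odds x := by
  have := p.multiDegree_evens_sub_odds x
  rw [h.neg_one_pow, one_mul, sub_self] at this
  omega

end SimpleGraph.Walk

section Exchange

variable {G : SimpleGraph V} {w : Sym2 V → ℤ} {μ : ℤ}

lemma exists_regular_le_of_forall_mem_perfectMatching {H : Multiset (Sym2 V)}
    (hH : ∀ e ∈ H, ∃ M, IsPerfectMatching G M ∧ matchWeight w M ≤ μ ∧ e ∈ M) :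
    ∃ S : Multiset (Sym2 V), H ≤ S ∧ (∀ e ∈ S, e ∈ G.edgeSet) ∧
      (∀ x, multiDegree S x = Multiset.card H) ∧ (S.map w).sum ≤ Multiset.card H * μ := by
  induction H using Multiset.induction with
  | empty => exact ⟨0, le_rfl, by simp, by simp [multiDegree], by simp⟩
  | cons e H ih =>
    obtain ⟨S, hHS, hSG, hSdeg, hSw⟩ := ih fun f hf => hH f (Multiset.mem_cons_of_mem hf)
    obtain ⟨M, hM, hMw, heM⟩ := hH e (Multiset.mem_cons_self e H)
    refine ⟨M.val + S, ?_, ?_, fun x => ?_, ?_⟩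
    · rw [← Multiset.singleton_add]
      exact add_le_add (Multiset.singleton_le.2 heM) hHS
    · simp only [Multiset.mem_add]
      rintro f (hf | hf)
      exacts [hM.1 f hf, hSG f hf]
    · rw [multiDegree_add, hM.multiDegree_eq_one, hSdeg, Multiset.card_cons, add_comm]
    · have hMval : (M.val.map w).sum = matchWeight w M := rfl
      rw [Multiset.map_add, Multiset.sum_add, Multiset.card_cons, hMval]
      push_cast
      linarith

lemma IsBipartitionSide.sum_map_le_of_multiDegree_eq [Fintype V] {A : Finset V}
    (hA : IsBipartitionSide G A)
    (hμ : ∀ M, IsPerfectMatching G M → μ ≤ matchWeight w M) {H L : Multiset (Sym2 V)}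
    (hH : ∀ e ∈ H, ∃ M, IsPerfectMatching G M ∧ matchWeight w M ≤ μ ∧ e ∈ M)
    (hLG : ∀ e ∈ L, e ∈ G.edgeSet) (hdeg : ∀ x, multiDegree H x = multiDegree L x) :
    (H.map w).sum ≤ (L.map w).sum := by
  obtain ⟨S, hHS, hSG, hSdeg, hSw⟩ := exists_regular_le_of_forall_mem_perfectMatching hH
  obtain ⟨T, rfl⟩ := Multiset.le_iff_exists_add.1 hHS
  have hLT := hA.mul_le_sum_map_of_regular hμ (S := L + T)
    (fun e he => (Multiset.mem_add.1 he).elim (hLG e) (hSG e <| Multiset.mem_add.2 <| .inr ·))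
    fun x => by rw [multiDegree_add, ← hdeg, ← multiDegree_add, hSdeg]
  simp only [Multiset.map_add, Multiset.sum_add] at hSw hLT
  linarith

lemma IsBipartitionSide.sum_map_evens_eq_odds [Fintype V] {A : Finset V}
    (hA : IsBipartitionSide G A)
    (hμ : ∀ M, IsPerfectMatching G M → μ ≤ matchWeight w M) {u : V} (c : G.Walk u u)
    (heven : Even c.length)
    (hc : ∀ e ∈ c.edges, ∃ M, IsPerfectMatching G M ∧ matchWeight w M ≤ μ ∧ e ∈ M) :
    (c.edges.evens.map w).sum = (c.edges.odds.map w).sum := by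
  have hE := c.edges.evens_sublist.subset
  have hO := c.edges.odds_sublist.subset
  have hG (e : Sym2 V) (he : e ∈ c.edges) : e ∈ G.edgeSet := c.edges_subset_edgeSet he
  apply le_antisymm
  · simpa using hA.sum_map_le_of_multiDegree_eq hμ (fun e he => hc e (hE he))
      (fun e he => hG e (hO he)) (c.multiDegree_evens_eq_odds heven)
  · simpa using hA.sum_map_le_of_multiDegree_eq hμ (fun e he => hc e (hO he))
      (fun e he => hG e (hE he)) fun x => (c.multiDegree_evens_eq_odds heven x).symm

end Exchange

end

theorem cycle_nonzero_circulation_not_in_union_of_min_matchings_general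
    {V : Type*} [Fintype V] [DecidableEq V]
    (G : SimpleGraph V) (hbip : G.Colorable 2) (w : Sym2 V → ℤ)
    {v₀ : V} (c : G.Walk v₀ v₀) (heven : Even c.length)
    (hcirc : circulation w c.edges ≠ 0) :
    ¬ (∀ e ∈ c.edges, ∃ M : Finset (Sym2 V), IsPerfectMatching G M ∧
        (∀ M', IsPerfectMatching G M' → matchWeight w M ≤ matchWeight w M') ∧ e ∈ M) := by
  intro hmin
  obtain ⟨A, hA⟩ := hbip.exists_isBipartitionSide
  apply hcirc
  rw [circulation, List.altSum_map, abs_eq_zero, sub_eq_zero]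
  rcases hce : c.edges with _ | ⟨e₀, l⟩
  · rfl
  obtain ⟨M₀, hM₀, hM₀min, -⟩ := hmin e₀ (hce ▸ List.mem_cons_self)
  rw [← hce]
  refine hA.sum_map_evens_eq_odds hM₀min c heven fun e he => ?_
  obtain ⟨M, hM, hMmin, heM⟩ := hmin e he
  exact ⟨M, hM, hMmin M₀ hM₀, heM⟩

/-- Let `G` be a bipartite graph with a perfect matching, `w` an integer weight function
on its edges, and `C` an even cycle of `G` with nonzero circulation.  Then the subgraph
`G₁` formed by the union of all minimum-weight perfect matchings of `G` does not contain
`C`, i.e. it is not the case that every edge of `C` lies in some minimum-weight perfect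
matching of `G`. -/
theorem cycle_nonzero_circulation_not_in_union_of_min_matchings
    {V : Type*} [Fintype V] [DecidableEq V]
    (G : SimpleGraph V) (hbip : G.Colorable 2) (w : Sym2 V → ℤ)
    (hpm : ∃ M, IsPerfectMatching G M)
    {v₀ : V} (c : G.Walk v₀ v₀) (hc : c.IsCycle) (heven : Even c.length)
    (hcirc : circulation w c.edges ≠ 0) :
    ¬ (∀ e ∈ c.edges, ∃ M : Finset (Sym2 V), IsPerfectMatching G M ∧
        (∀ M', IsPerfectMatching G M' → matchWeight w M ≤ matchWeight w M') ∧ e ∈ M) :=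
  cycle_nonzero_circulation_not_in_union_of_min_matchings_general G hbip w c heven hcirc
end

section
/- Let G(V,E) be a bipartite graph that has a perfect matching, with an integer weight function w on its edges, and let q be the minimum w-weight of a perfect matching of G. Let E_1 ⊆ E be the union of all perfect matchings of G of weight q. Then every perfect matching of the subgraph G_1(V, E_1) has w-weight exactly q. -/
set_option linter.unusedSectionVars false

namespace AuxPM

variable {V : Type*} [Fintype V] [DecidableEq V]

noncomputable def edgeAt (M : Finset (Sym2 V)) (hpm : ∀ v : V, ∃! e, e ∈ M ∧ v ∈ e) (v : V) :
    Sym2 V :=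
  M.choose (v ∈ ·) (hpm v)

variable {M : Finset (Sym2 V)} (hpm : ∀ v : V, ∃! e, e ∈ M ∧ v ∈ e)

lemma edgeAt_mem (v : V) : edgeAt M hpm v ∈ M := M.choose_mem _ (hpm v)

lemma mem_edgeAt (v : V) : v ∈ edgeAt M hpm v := M.choose_property _ (hpm v)

lemma edgeAt_eq {e : Sym2 V} {v : V} (he : e ∈ M) (hv : v ∈ e) : edgeAt M hpm v = e :=
  (hpm v).unique ⟨edgeAt_mem hpm v, mem_edgeAt hpm v⟩ ⟨he, hv⟩

noncomputable def partner (v : V) : V := Sym2.Mem.other' (mem_edgeAt hpm v)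

lemma partner_spec (v : V) : s(v, partner hpm v) = edgeAt M hpm v :=
  Sym2.other_spec' (mem_edgeAt hpm v)

lemma partner_mem (v : V) : partner hpm v ∈ edgeAt M hpm v := by
  rw [← partner_spec hpm v]; exact Sym2.mem_mk_right _ _

lemma edgeAt_partner (v : V) : edgeAt M hpm (partner hpm v) = edgeAt M hpm v :=
  edgeAt_eq hpm (edgeAt_mem hpm v) (partner_mem hpm v)

lemma partner_partner (v : V) : partner hpm (partner hpm v) = v := by
  have h2 := partner_spec hpm (partner hpm v)
  rw [edgeAt_partner hpm v, ← partner_spec hpm v] at h2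
  rcases Sym2.eq_iff.mp h2 with ⟨h1, h3⟩ | ⟨h1, h3⟩
  · rw [h3, h1]
  · exact h3

lemma fin_two (i : Fin 2) : i = 0 ∨ i = 1 := by fin_cases i <;> simp



section Color

variable (G : SimpleGraph V) (c : V → Fin 2)

/-- crossing: the partner has a different colour. -/
lemma partner_color (hc : ∀ {u v : V}, G.Adj u v → c u ≠ c v)
    (hMG : ∀ e ∈ M, e ∈ G.edgeSet) (v : V) : c (partner hpm v) ≠ c v := by
  have h := hMG _ (edgeAt_mem hpm v)
  rw [← partner_spec hpm v, SimpleGraph.mem_edgeSet] at h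
  exact (hc h).symm

lemma color_partner_eq_one (hcr : ∀ v, c (partner hpm v) ≠ c v) {v : V} (hv : c v = 0) :
    c (partner hpm v) = 1 := by
  rcases fin_two (c (partner hpm v)) with h | h
  · exact absurd (h.trans hv.symm) (hcr v)
  · exact h

lemma color_partner_eq_zero (hcr : ∀ v, c (partner hpm v) ≠ c v) {v : V} (hv : c v = 1) :
    c (partner hpm v) = 0 := by
  rcases fin_two (c (partner hpm v)) with h | h
  · exact h
  · exact absurd (h.trans hv.symm) (hcr v)

/-- the matching is the image of `edgeAt` over the colour-0 vertices. -/
lemma matching_eq_image (hcr : ∀ v, c (partner hpm v) ≠ c v) :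
    M = Finset.image (fun a : {v : V // c v = 0} => edgeAt M hpm a.1) Finset.univ := by
  ext e
  simp only [Finset.mem_image, Finset.mem_univ, true_and]
  constructor
  · intro he
    induction e using Sym2.ind with
    | _ x y =>
      have hex : edgeAt M hpm x = s(x, y) := edgeAt_eq hpm he (Sym2.mem_mk_left x y)
      have hpx : partner hpm x = y := by
        have := partner_spec hpm x
        rw [hex] at this
        rcases Sym2.eq_iff.mp this with ⟨h1, h2⟩ | ⟨h1, h2⟩
        · exact h2
        · exfalso; exact hcr x (by rw [h2, h1])
      have hxy : c x ≠ c y := by rw [← hpx]; exact fun h => hcr x h.symm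
      rcases fin_two (c x) with hx | hx
      · exact ⟨⟨x, hx⟩, hex⟩
      · rcases fin_two (c y) with hy | hy
        · refine ⟨⟨y, hy⟩, edgeAt_eq hpm he (Sym2.mem_mk_right x y)⟩
        · exact absurd (hx.trans hy.symm) hxy
  · rintro ⟨a, rfl⟩
    exact edgeAt_mem hpm a.1

lemma edgeAt_injective (hcr : ∀ v, c (partner hpm v) ≠ c v) (a a' : {v : V // c v = 0})
    (h : edgeAt M hpm a.1 = edgeAt M hpm a'.1) : a = a' := by
  have hm : a.1 ∈ edgeAt M hpm a'.1 := h ▸ mem_edgeAt hpm a.1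
  rw [← partner_spec hpm a'.1, Sym2.mem_iff] at hm
  rcases hm with h1 | h1
  · exact Subtype.ext h1
  · exfalso
    have := color_partner_eq_one hpm c hcr a'.2
    rw [← h1] at this
    rw [a.2] at this
    exact absurd this (by decide)

lemma matchWeight_eq_sum (w : Sym2 V → ℤ) (hcr : ∀ v, c (partner hpm v) ≠ c v) :
    matchWeight w M = ∑ a : {v : V // c v = 0}, w (edgeAt M hpm a.1) := by
  have h1 : matchWeight w M
      = ∑ e ∈ Finset.image (fun a : {v : V // c v = 0} => edgeAt M hpm a.1) Finset.univ, w e :=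
    Finset.sum_congr (matching_eq_image hpm c hcr) (fun _ _ => rfl)
  rw [h1, Finset.sum_image]
  intro a _ a' _ h
  exact edgeAt_injective hpm c hcr a a' h

end Color

section Perm

variable {N₀ : Finset (Sym2 V)} (hpm₀ : ∀ v : V, ∃! e, e ∈ N₀ ∧ v ∈ e)
variable (c : V → Fin 2)

/-- the permutation of the colour-0 class induced by a matching `M`, squared up
using a reference matching `N₀`. -/
noncomputable def permOf (hcr : ∀ v, c (partner hpm v) ≠ c v)
    (hcr₀ : ∀ v, c (partner hpm₀ v) ≠ c v) : Equiv.Perm {v : V // c v = 0} where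
  toFun a := ⟨partner hpm₀ (partner hpm a.1),
    color_partner_eq_zero hpm₀ c hcr₀ (color_partner_eq_one hpm c hcr a.2)⟩
  invFun a := ⟨partner hpm (partner hpm₀ a.1),
    color_partner_eq_zero hpm c hcr (color_partner_eq_one hpm₀ c hcr₀ a.2)⟩
  left_inv a := by ext; simp [partner_partner]
  right_inv a := by ext; simp [partner_partner]

lemma permOf_prop (hcr : ∀ v, c (partner hpm v) ≠ c v)
    (hcr₀ : ∀ v, c (partner hpm₀ v) ≠ c v) (a : {v : V // c v = 0}) :
    partner hpm₀ ((permOf hpm hpm₀ c hcr hcr₀ a).1) = partner hpm a.1 := by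
  simp [permOf, partner_partner]

lemma permOf_edge (hcr : ∀ v, c (partner hpm v) ≠ c v)
    (hcr₀ : ∀ v, c (partner hpm₀ v) ≠ c v) (a : {v : V // c v = 0}) :
    s(a.1, partner hpm₀ ((permOf hpm hpm₀ c hcr hcr₀ a).1)) = edgeAt M hpm a.1 := by
  rw [permOf_prop, partner_spec]

/-- the matching induced by a permutation of the colour-0 class. -/
noncomputable def matchingOf (σ : Equiv.Perm {v : V // c v = 0}) : Finset (Sym2 V) :=
  Finset.image (fun a : {v : V // c v = 0} => s(a.1, partner hpm₀ (σ a).1)) Finset.univ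

variable (σ : Equiv.Perm {v : V // c v = 0})

lemma self_mem_matchingOf (a : {v : V // c v = 0}) :
    s(a.1, partner hpm₀ (σ a).1) ∈ matchingOf hpm₀ c σ :=
  Finset.mem_image_of_mem _ (Finset.mem_univ a)

lemma matchingOf_isPM (hcr₀ : ∀ v, c (partner hpm₀ v) ≠ c v) (G : SimpleGraph V)
    (hG : ∀ a : {v : V // c v = 0}, s(a.1, partner hpm₀ (σ a).1) ∈ G.edgeSet) :
    IsPerfectMatching G (matchingOf hpm₀ c σ) := by
  have hcol : ∀ a : {v : V // c v = 0}, c (partner hpm₀ (σ a).1) = 1 :=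
    fun a => color_partner_eq_one hpm₀ c hcr₀ (σ a).2
  constructor
  · intro e he
    rw [matchingOf, Finset.mem_image] at he
    obtain ⟨a, -, rfl⟩ := he
    exact hG a
  · intro v
    have huniq : ∀ e, (e ∈ matchingOf hpm₀ c σ ∧ v ∈ e) →
        ∃ a : {v : V // c v = 0}, e = s(a.1, partner hpm₀ (σ a).1) ∧
          (v = a.1 ∨ v = partner hpm₀ (σ a).1) := by
      rintro e ⟨he, hv⟩
      rw [matchingOf, Finset.mem_image] at he
      obtain ⟨a, -, rfl⟩ := he
      exact ⟨a, rfl, Sym2.mem_iff.mp hv⟩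
    rcases fin_two (c v) with hv | hv
    · refine ExistsUnique.intro s(v, partner hpm₀ (σ ⟨v, hv⟩).1)
        ⟨self_mem_matchingOf hpm₀ c σ ⟨v, hv⟩, Sym2.mem_mk_left _ _⟩ ?_
      intro e he
      obtain ⟨a, rfl, hva⟩ := huniq e he
      rcases hva with h | h
      · have : a = ⟨v, hv⟩ := Subtype.ext h.symm
        rw [this]
      · exfalso; rw [h, hcol a] at hv; exact absurd hv (by decide)
    · have hb : c (partner hpm₀ v) = 0 := color_partner_eq_zero hpm₀ c hcr₀ hv
      set a₀ : {v : V // c v = 0} := σ.symm ⟨partner hpm₀ v, hb⟩ with ha₀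
      have hσ : σ a₀ = ⟨partner hpm₀ v, hb⟩ := σ.apply_symm_apply _
      have hedge : partner hpm₀ (σ a₀).1 = v := by rw [hσ]; exact partner_partner hpm₀ v
      refine ExistsUnique.intro s(a₀.1, partner hpm₀ (σ a₀).1)
        ⟨self_mem_matchingOf hpm₀ c σ a₀, by rw [hedge]; exact Sym2.mem_mk_right _ _⟩ ?_
      intro e he
      obtain ⟨a, rfl, hva⟩ := huniq e he
      rcases hva with h | h
      · exfalso; rw [h] at hv; rw [a.2] at hv; exact absurd hv (by decide)
      · have h5 : (σ a).1 = partner hpm₀ v := by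
          have h4 := congrArg (partner hpm₀) h
          rw [partner_partner hpm₀] at h4
          exact h4.symm
        have h6 : σ a = ⟨partner hpm₀ v, hb⟩ := Subtype.ext h5
        have haa : a = a₀ := by rw [ha₀, ← h6, Equiv.symm_apply_apply]
        rw [haa]

lemma matchingOf_weight (hcr₀ : ∀ v, c (partner hpm₀ v) ≠ c v) (w : Sym2 V → ℤ) :
    matchWeight w (matchingOf hpm₀ c σ)
      = ∑ a : {v : V // c v = 0}, w s(a.1, partner hpm₀ (σ a).1) := by
  rw [matchWeight, matchingOf, Finset.sum_image]
  intro a _ a' _ h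
  rcases Sym2.eq_iff.mp h with ⟨h1, -⟩ | ⟨h1, -⟩
  · exact Subtype.ext h1
  · exfalso
    have h2 := color_partner_eq_one hpm₀ c hcr₀ (σ a').2
    rw [← h1] at h2; rw [a.2] at h2; exact absurd h2 (by decide)

end Perm

lemma partner_congr {N : Finset (Sym2 V)} (hpm' : ∀ v : V, ∃! e, e ∈ N ∧ v ∈ e) (v : V)
    (h : edgeAt M hpm v = edgeAt N hpm' v) : partner hpm v = partner hpm' v := by
  have h1 := partner_spec hpm v
  have h2 := partner_spec hpm' v
  rw [← h, ← h1] at h2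
  rcases Sym2.eq_iff.mp h2 with ⟨-, h3⟩ | ⟨h3, h4⟩
  · exact h3.symm
  · rw [h4, ← h3]

lemma permMatrix_apply' {α : Type*} [Fintype α] [DecidableEq α]
    (σ : Equiv.Perm α) (i j : α) :
    (σ.permMatrix ℚ) i j = if σ i = j then 1 else 0 := by
  simp [Equiv.Perm.permMatrix, PEquiv.toMatrix_apply, Equiv.toPEquiv_apply, eq_comm]

end AuxPM

open AuxPM in
/-- Let `G` be a bipartite graph with a perfect matching, `w` an integer weight function
on its edges, and `q` the minimum weight of a perfect matching of `G`.  Then every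
perfect matching of the subgraph `G₁` whose edge set `E₁` is the union of all
perfect matchings of `G` of weight `q` (i.e. every set `M` of edges of `E₁` covering
each vertex exactly once) has weight exactly `q`. -/
theorem matchings_in_union_of_min_matchings_have_min_weight
    {V : Type*} [Fintype V] [DecidableEq V]
    (G : SimpleGraph V) (hbip : G.Colorable 2) (w : Sym2 V → ℤ) (q : ℤ)
    (hq : ∃ M, IsPerfectMatching G M ∧ matchWeight w M = q)
    (hmin : ∀ M, IsPerfectMatching G M → q ≤ matchWeight w M)
    (M : Finset (Sym2 V))
    (hME₁ : ∀ e ∈ M, ∃ M' : Finset (Sym2 V),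
      IsPerfectMatching G M' ∧ matchWeight w M' = q ∧ e ∈ M')
    (hMpm : ∀ v : V, ∃! e, e ∈ M ∧ v ∈ e) :
    matchWeight w M = q := by
  classical
  obtain ⟨co⟩ := hbip
  set c : V → Fin 2 := ⇑co with hcdef
  have hc : ∀ {u v : V}, G.Adj u v → c u ≠ c v := fun h => co.valid h
  -- the reference minimum matching
  obtain ⟨N₀, hN₀, hN₀q⟩ := hq
  have hpm₀ := hN₀.2
  have hcr₀ : ∀ v, c (partner hpm₀ v) ≠ c v := partner_color hpm₀ G c hc hN₀.1
  -- M is a perfect matching of G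
  have hME : ∀ e ∈ M, e ∈ G.edgeSet := by
    intro e he
    obtain ⟨M', hM', -, heM'⟩ := hME₁ e he
    exact hM'.1 e heM'
  have hMG : IsPerfectMatching G M := ⟨hME, hMpm⟩
  have hcrM : ∀ v, c (partner hMpm v) ≠ c v := partner_color hMpm G c hc hME
  set A := {v : V // c v = 0} with hA
  -- weight of M as a sum over colour-0 vertices
  have hwM : matchWeight w M = ∑ a : A, w (edgeAt M hMpm a.1) :=
    matchWeight_eq_sum hMpm c w hcrM
  -- the minimum matchings through the edges of M
  have H : ∀ a : A, ∃ N' : Finset (Sym2 V),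
      IsPerfectMatching G N' ∧ matchWeight w N' = q ∧ edgeAt M hMpm a.1 ∈ N' :=
    fun a => hME₁ _ (edgeAt_mem hMpm a.1)
  choose Na hNaPM hNaq hNamem using H
  have hcrN : ∀ a, ∀ v, c (partner (hNaPM a).2 v) ≠ c v :=
    fun a => partner_color (hNaPM a).2 G c hc (hNaPM a).1
  set W : Matrix A A ℚ := fun a b => ((w s(a.1, partner hpm₀ b.1) : ℤ) : ℚ) with hW
  -- cost of an allowed permutation is at least q
  have key : ∀ σ : Equiv.Perm A,
      (∀ i : A, s(i.1, partner hpm₀ (σ i).1) ∈ G.edgeSet) → (q : ℚ) ≤ ∑ i, W i (σ i) := by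
    intro σ hσ
    have h1 := hmin _ (matchingOf_isPM hpm₀ c σ hcr₀ G hσ)
    rw [matchingOf_weight hpm₀ c σ hcr₀ w] at h1
    calc (q : ℚ) ≤ ((∑ a : A, w s(a.1, partner hpm₀ (σ a).1) : ℤ) : ℚ) := by exact_mod_cast h1
      _ = ∑ i, W i (σ i) := by push_cast; rfl
  -- the permutation attached to M, and those attached to the Na
  obtain ⟨πM, hπM⟩ : ∃ σ : Equiv.Perm A,
      ∀ i : A, s(i.1, partner hpm₀ (σ i).1) = edgeAt M hMpm i.1 :=
    ⟨permOf hMpm hpm₀ c hcrM hcr₀, permOf_edge hMpm hpm₀ c hcrM hcr₀⟩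
  have hπN : ∀ a : A, ∃ σ : Equiv.Perm A,
      ∀ i : A, s(i.1, partner hpm₀ (σ i).1) = edgeAt (Na a) (hNaPM a).2 i.1 :=
    fun a => ⟨permOf (hNaPM a).2 hpm₀ c (hcrN a) hcr₀,
      permOf_edge (hNaPM a).2 hpm₀ c (hcrN a) hcr₀⟩
  choose π hπ using hπN
  -- facts about these permutations
  have hallowM : ∀ i : A, s(i.1, partner hpm₀ (πM i).1) ∈ G.edgeSet := by
    intro i; rw [hπM i]; exact hME _ (edgeAt_mem hMpm i.1)
  have hallowN : ∀ a i : A, s(i.1, partner hpm₀ (π a i).1) ∈ G.edgeSet := by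
    intro a i; rw [hπ a i]; exact (hNaPM a).1 _ (edgeAt_mem (hNaPM a).2 i.1)
  have hcostM : ∑ i, W i (πM i) = ((matchWeight w M : ℤ) : ℚ) := by
    rw [hwM]; push_cast
    refine Finset.sum_congr rfl fun i _ => ?_
    rw [← hπM i]
  have hcostN : ∀ a : A, ∑ i, W i (π a i) = (q : ℚ) := by
    intro a
    have h2 : matchWeight w (Na a) = ∑ i : A, w (edgeAt (Na a) (hNaPM a).2 i.1) :=
      matchWeight_eq_sum (hNaPM a).2 c w (hcrN a)
    rw [← hNaq a, h2]; push_cast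
    refine Finset.sum_congr rfl fun i _ => ?_
    rw [← hπ a i]
  have hdiag : ∀ a : A, π a a = πM a := by
    intro a
    have h1 : edgeAt (Na a) (hNaPM a).2 a.1 = edgeAt M hMpm a.1 :=
      edgeAt_eq (hNaPM a).2 (hNamem a) (mem_edgeAt hMpm a.1)
    have h2 : s(a.1, partner hpm₀ ((π a) a).1) = s(a.1, partner hpm₀ (πM a).1) := by
      rw [hπ a a, hπM a, h1]
    have h3 : partner hpm₀ ((π a) a).1 = partner hpm₀ (πM a).1 := by
      rcases Sym2.eq_iff.mp h2 with ⟨-, h3⟩ | ⟨h3, h4⟩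
      · exact h3
      · rw [h4, ← h3]
    have h4 := congrArg (partner hpm₀) h3
    rw [partner_partner hpm₀, partner_partner hpm₀] at h4
    exact Subtype.ext h4
  -- now the Birkhoff argument
  rcases isEmpty_or_nonempty A with hAe | hAne
  · -- no colour-0 vertices : both weights are empty sums
    have h1 : matchWeight w M = 0 := by rw [hwM]; simp
    have h2 : matchWeight w N₀ = 0 := by
      rw [matchWeight_eq_sum hpm₀ c w hcr₀]; simp
    rw [h1, ← hN₀q, h2]
  · obtain ⟨a₁⟩ := hAne
    set n : ℚ := (Fintype.card A : ℚ) with hn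
    have hn0 : 0 < n := by
      rw [hn]
      have : Nonempty A := ⟨a₁⟩
      exact_mod_cast Fintype.card_pos
    set X : Matrix A A ℚ := fun i j => n⁻¹ *
      ((∑ a : A, (if π a i = j then (1:ℚ) else 0))
        + (if π a₁ i = j then (1:ℚ) else 0) - (if πM i = j then (1:ℚ) else 0)) with hX
    -- basic sums of indicators
    have hrow : ∀ (σ : Equiv.Perm A) (i : A), ∑ j : A, (if σ i = j then (1:ℚ) else 0) = 1 := by
      intro σ i
      rw [Finset.sum_ite_eq]
      simp
    have hcol : ∀ (σ : Equiv.Perm A) (j : A), ∑ i : A, (if σ i = j then (1:ℚ) else 0) = 1 := by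
      intro σ j
      have : ∀ i : A, (if σ i = j then (1:ℚ) else 0) = (if i = σ.symm j then (1:ℚ) else 0) := by
        intro i
        congr 1
        · simp [Equiv.apply_eq_iff_eq_symm_apply]
      rw [Finset.sum_congr rfl fun i _ => this i, Finset.sum_ite_eq']
      simp
    -- X is doubly stochastic
    have hXds : X ∈ doublyStochastic ℚ A := by
      rw [mem_doublyStochastic_iff_sum]
      refine ⟨fun i j => ?_, fun i => ?_, fun j => ?_⟩
      · simp only [hX]
        by_cases hij : πM i = j
        · have h1 : (1:ℚ) ≤ ∑ a : A, (if π a i = j then (1:ℚ) else 0) := by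
            have h2 : (if π i i = j then (1:ℚ) else 0) = 1 := by
              rw [if_pos]; rw [hdiag i, hij]
            calc (1:ℚ) = (if π i i = j then (1:ℚ) else 0) := h2.symm
              _ ≤ ∑ a : A, (if π a i = j then (1:ℚ) else 0) :=
                Finset.single_le_sum (f := fun a : A => if π a i = j then (1:ℚ) else 0)
                  (fun a _ => by positivity) (Finset.mem_univ i)
          have h3 : (0:ℚ) ≤ (if π a₁ i = j then (1:ℚ) else 0) := by positivity
          rw [if_pos hij]
          have : (0:ℚ) ≤ (∑ a : A, (if π a i = j then (1:ℚ) else 0))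
              + (if π a₁ i = j then (1:ℚ) else 0) - 1 := by linarith
          positivity
        · rw [if_neg hij]
          have h1 : (0:ℚ) ≤ ∑ a : A, (if π a i = j then (1:ℚ) else 0) :=
            Finset.sum_nonneg fun a _ => by positivity
          have h3 : (0:ℚ) ≤ (if π a₁ i = j then (1:ℚ) else 0) := by positivity
          have : (0:ℚ) ≤ (∑ a : A, (if π a i = j then (1:ℚ) else 0))
              + (if π a₁ i = j then (1:ℚ) else 0) - 0 := by linarith
          positivity
      · simp only [hX]
        simp only [← Finset.mul_sum]
        rw [Finset.sum_sub_distrib, Finset.sum_add_distrib, Finset.sum_comm]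
        rw [Finset.sum_congr rfl fun a _ => hrow (π a) i, hrow (π a₁) i, hrow πM i]
        rw [Finset.sum_const, Finset.card_univ, nsmul_eq_mul]
        rw [add_sub_cancel_right]
        rw [← hn, mul_one]
        exact inv_mul_cancel₀ hn0.ne'
      · simp only [hX]
        simp only [← Finset.mul_sum]
        rw [Finset.sum_sub_distrib, Finset.sum_add_distrib, Finset.sum_comm]
        rw [Finset.sum_congr rfl fun a _ => hcol (π a) j, hcol (π a₁) j, hcol πM j]
        rw [Finset.sum_const, Finset.card_univ, nsmul_eq_mul]
        rw [add_sub_cancel_right]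
        rw [← hn, mul_one]
        exact inv_mul_cancel₀ hn0.ne'
    -- the cost of X
    have hWcost : ∀ (σ : Equiv.Perm A) (i : A),
        ∑ j : A, (if σ i = j then (1:ℚ) else 0) * W i j = W i (σ i) := by
      intro σ i
      have : ∀ j : A, (if σ i = j then (1:ℚ) else 0) * W i j
          = (if σ i = j then W i j else 0) := by
        intro j
        split <;> simp
      rw [Finset.sum_congr rfl fun j _ => this j, Finset.sum_ite_eq]
      simp
    have hEi : ∀ i : A, ∑ j : A,
        ((∑ a : A, (if π a i = j then (1:ℚ) else 0))
          + (if π a₁ i = j then (1:ℚ) else 0) - (if πM i = j then (1:ℚ) else 0)) * W i j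
        = (∑ a : A, W i (π a i)) + W i (π a₁ i) - W i (πM i) := by
      intro i
      have expand : ∀ j : A,
          ((∑ a : A, (if π a i = j then (1:ℚ) else 0))
            + (if π a₁ i = j then (1:ℚ) else 0) - (if πM i = j then (1:ℚ) else 0)) * W i j
          = (∑ a : A, (if π a i = j then (1:ℚ) else 0) * W i j)
            + (if π a₁ i = j then (1:ℚ) else 0) * W i j
            - (if πM i = j then (1:ℚ) else 0) * W i j := by
        intro j
        rw [sub_mul, add_mul, Finset.sum_mul]
      rw [Finset.sum_congr rfl fun j _ => expand j]
      rw [Finset.sum_sub_distrib, Finset.sum_add_distrib, Finset.sum_comm]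
      rw [Finset.sum_congr rfl fun a _ => hWcost (π a) i, hWcost (π a₁) i, hWcost πM i]
    have hLX : ∑ i : A, ∑ j : A, X i j * W i j
        = n⁻¹ * ((∑ a : A, ∑ i : A, W i (π a i)) + (∑ i : A, W i (π a₁ i))
            - (∑ i : A, W i (πM i))) := by
      have h1 : ∀ i : A, ∑ j : A, X i j * W i j
          = n⁻¹ * ((∑ a : A, W i (π a i)) + W i (π a₁ i) - W i (πM i)) := by
        intro i
        simp only [hX, mul_assoc]
        rw [← Finset.mul_sum, hEi i]
      rw [Finset.sum_congr rfl fun i _ => h1 i, ← Finset.mul_sum]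
      congr 1
      rw [Finset.sum_sub_distrib, Finset.sum_add_distrib, Finset.sum_comm]
    -- value of the cost of X
    have hLXval : ∑ i : A, ∑ j : A, X i j * W i j
        = n⁻¹ * (n * q + q - ((matchWeight w M : ℤ) : ℚ)) := by
      rw [hLX, Finset.sum_congr rfl fun a _ => hcostN a, hcostN a₁, hcostM,
        Finset.sum_const, Finset.card_univ, nsmul_eq_mul, ← hn]
    -- Birkhoff decomposition
    obtain ⟨f, hf0, hf1, hfX⟩ := exists_eq_sum_perm_of_mem_doublyStochastic hXds
    have hpt : ∀ i j : A, X i j = ∑ σ : Equiv.Perm A, f σ * (if σ i = j then (1:ℚ) else 0) := by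
      intro i j
      rw [← hfX]
      simp [Matrix.sum_apply, Matrix.smul_apply, permMatrix_apply', smul_eq_mul,
        Equiv.toPEquiv_apply]
    -- permutations in the support of f are allowed
    have hsupp : ∀ σ : Equiv.Perm A, 0 < f σ →
        ∀ i : A, s(i.1, partner hpm₀ (σ i).1) ∈ G.edgeSet := by
      intro σ hfσ i
      have h1 : 0 < X i (σ i) := by
        rw [hpt i (σ i)]
        have hterm : f σ = f σ * (if σ i = σ i then (1:ℚ) else 0) := by simp
        calc (0:ℚ) < f σ := hfσ
          _ = f σ * (if σ i = σ i then (1:ℚ) else 0) := hterm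
          _ ≤ ∑ σ' : Equiv.Perm A, f σ' * (if σ' i = σ i then (1:ℚ) else 0) :=
            Finset.single_le_sum
              (f := fun σ' : Equiv.Perm A => f σ' * (if σ' i = σ i then (1:ℚ) else 0))
              (fun σ' _ => mul_nonneg (hf0 σ') (by positivity)) (Finset.mem_univ σ)
      by_contra hcon
      have hna : ∀ a : A, ¬ (π a i = σ i) := by
        intro a ha
        apply hcon
        have h2 : s(i.1, partner hpm₀ (σ i).1) = s(i.1, partner hpm₀ ((π a) i).1) := by rw [ha]
        rw [h2]
        exact hallowN a i
      have hMna : ¬ (πM i = σ i) := by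
        intro ha
        apply hcon
        have h2 : s(i.1, partner hpm₀ (σ i).1) = s(i.1, partner hpm₀ (πM i).1) := by rw [ha]
        rw [h2]
        exact hallowM i
      have h3 : X i (σ i) = 0 := by
        simp only [hX]
        rw [Finset.sum_eq_zero fun a _ => if_neg (hna a), if_neg (hna a₁), if_neg hMna]
        ring
      rw [h3] at h1
      exact lt_irrefl 0 h1
    -- the cost of X as a combination of permutation costs
    have hLX2 : ∑ i : A, ∑ j : A, X i j * W i j
        = ∑ σ : Equiv.Perm A, f σ * ∑ i : A, W i (σ i) := by
      have h1 : ∀ i j : A, X i j * W i j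
          = ∑ σ : Equiv.Perm A, f σ * ((if σ i = j then (1:ℚ) else 0) * W i j) := by
        intro i j
        rw [hpt i j, Finset.sum_mul]
        exact Finset.sum_congr rfl fun σ _ => by ring
      calc ∑ i : A, ∑ j : A, X i j * W i j
          = ∑ i : A, ∑ j : A, ∑ σ : Equiv.Perm A,
              f σ * ((if σ i = j then (1:ℚ) else 0) * W i j) :=
            Finset.sum_congr rfl fun i _ => Finset.sum_congr rfl fun j _ => h1 i j
        _ = ∑ i : A, ∑ σ : Equiv.Perm A, ∑ j : A,
              f σ * ((if σ i = j then (1:ℚ) else 0) * W i j) :=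
            Finset.sum_congr rfl fun i _ => Finset.sum_comm
        _ = ∑ σ : Equiv.Perm A, ∑ i : A, ∑ j : A,
              f σ * ((if σ i = j then (1:ℚ) else 0) * W i j) := Finset.sum_comm
        _ = ∑ σ : Equiv.Perm A, f σ * ∑ i : A, W i (σ i) := by
            refine Finset.sum_congr rfl fun σ _ => ?_
            rw [Finset.mul_sum]
            refine Finset.sum_congr rfl fun i _ => ?_
            rw [← Finset.mul_sum, hWcost σ i]
    -- lower bound on the cost of X
    have hge : (q : ℚ) ≤ ∑ σ : Equiv.Perm A, f σ * ∑ i : A, W i (σ i) := by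
      calc (q : ℚ) = (∑ σ : Equiv.Perm A, f σ) * q := by rw [hf1, one_mul]
        _ = ∑ σ : Equiv.Perm A, f σ * q := Finset.sum_mul _ _ _
        _ ≤ ∑ σ : Equiv.Perm A, f σ * ∑ i : A, W i (σ i) := by
            refine Finset.sum_le_sum fun σ _ => ?_
            rcases eq_or_lt_of_le (hf0 σ) with h | h
            · rw [← h, zero_mul, zero_mul]
            · exact mul_le_mul_of_nonneg_left (key σ (hsupp σ h)) h.le
    -- conclude
    have hfinal : (q : ℚ) ≤ n⁻¹ * (n * q + q - ((matchWeight w M : ℤ) : ℚ)) := by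
      rw [← hLXval]
      rw [hLX2]
      exact hge
    have h6 : n * (q:ℚ) ≤ n * (n⁻¹ * (n * q + q - ((matchWeight w M : ℤ) : ℚ))) :=
      mul_le_mul_of_nonneg_left hfinal hn0.le
    rw [← mul_assoc, mul_inv_cancel₀ hn0.ne', one_mul] at h6
    have h7 : ((matchWeight w M : ℤ) : ℚ) ≤ (q : ℚ) := by linarith
    have h8 : matchWeight w M ≤ q := by exact_mod_cast h7
    exact le_antisymm h8 (hmin M hMG)
end

section
/- Let H be a simple graph with n nodes and let r ≥ 3 be an integer such that H has no cycles of length at most r. Set r' = 2r if r is even and r' = 2r − 2 if r is odd. Then H has at most n⁴ cycles of length at most r' (cycles counted as subgraphs, i.e., up to choice of starting vertex and direction). -/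
/-!
With `k = ⌊r/2⌋` we have `2k ≤ r` and `r' ≤ 4k`. Cutting a cycle of length at most `4k` at
its vertices in positions `0, k, 2k, 3k` splits it into four paths of length at most `k`. Two
paths with the same ends and total length at most `2k`, below the girth, coincide; so the
cycle is determined by these four vertices, and there are at most `n⁴` such cycles.
-/

theorem List.eq_of_forall_take_drop_mul_eq {α : Type*} {k : ℕ} :
    ∀ {m : ℕ} {l l' : List α}, l.length ≤ m * k → l'.length ≤ m * k →
      (∀ i < m, (l.drop (i * k)).take k = (l'.drop (i * k)).take k) → l = l'
  | 0, l, l', hl, hl', _ => by simp_all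
  | m + 1, l, l', hl, hl', h => by
    have hdrop : l.drop k = l'.drop k := by
      refine List.eq_of_forall_take_drop_mul_eq (k := k) (m := m) (by simp; lia) (by simp; lia)
        fun i hi => ?_
      simpa [List.drop_drop, add_mul, add_comm] using h (i + 1) (by omega)
    simpa using congrArg₂ (· ++ ·) (h 0 m.succ_pos) hdrop

namespace SimpleGraph

variable {V : Type*} {G : SimpleGraph V}

namespace Walk

theorem IsPath.eq_of_length_add_length_lt_egirth {u v : V} {p q : G.Walk u v}
    (hp : p.IsPath) (hq : q.IsPath) (h : ((p.length + q.length : ℕ) : ℕ∞) < G.egirth) :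
    p = q := by
  -- the edges of `p` and `q` span a graph too small to contain a cycle, in which both are paths
  set G' := fromEdgeSet {e | e ∈ p.edges ∨ e ∈ q.edges}
  have hG' : G' ≤ G := (fromEdgeSet_le G).mpr fun e he =>
    he.1.elim (fun h => p.edges_subset_edgeSet h) (fun h => q.edges_subset_edgeSet h)
  have hacyc : G'.IsAcyclic := by
    intro a c hc
    have hsub : c.edges ⊆ p.edges ++ q.edges := fun e he => by
      have := c.edges_subset_edgeSet he
      rw [edgeSet_fromEdgeSet] at this
      exact List.mem_append.mpr this.1
    have hlen : c.length ≤ p.length + q.length := by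
      simpa using (hc.edges_nodup.subperm hsub).length_le
    have hcG := egirth_le_length (hc.mapLe hG')
    rw [length_mapLe] at hcG
    exact not_le.mpr h (hcG.trans (by exact_mod_cast hlen))
  have hG'edges {w : G.Walk u v} (hw : ∀ e ∈ w.edges, e ∈ p.edges ∨ e ∈ q.edges) :
      ∀ e ∈ w.edges, e ∈ G'.edgeSet := fun e he => by
    rw [edgeSet_fromEdgeSet]
    exact ⟨hw e he, G.not_isDiag_of_mem_edgeSet (w.edges_subset_edgeSet he)⟩
  have hpq : (⟨_, hp.transfer (hG'edges fun _ => Or.inl)⟩ : G'.Path u v) =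
      ⟨_, hq.transfer (hG'edges fun _ => Or.inr)⟩ :=
    (hacyc.subsingleton_path u v).elim _ _
  exact ext_support (by simpa using congrArg (fun r : G'.Path u v => r.1.support) hpq)

theorem IsCycle.isPath_take_drop {u : V} {c : G.Walk u u} (hc : c.IsCycle) {n k : ℕ}
    (h : 0 < n ∨ k < c.length) : ((c.drop n).take k).IsPath := by
  rcases Nat.eq_zero_or_pos n with rfl | hn
  · have htake := hc.isPath_take (h.resolve_left (lt_irrefl 0))
    rw [isPath_def, support_take] at htake ⊢
    simpa using htake
  · exact (hc.isPath_drop hn).take k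

theorem IsCycle.edges_eq_of_getVert_mul_eq {u u' : V} {c : G.Walk u u} {c' : G.Walk u' u'}
    (hc : c.IsCycle) (hc' : c'.IsCycle) {k m : ℕ} (hk : ((2 * k : ℕ) : ℕ∞) < G.egirth)
    (hl : c.length ≤ m * k) (hl' : c'.length ≤ m * k)
    (h : ∀ i < m, c.getVert (i * k) = c'.getVert (i * k)) : c.edges = c'.edges := by
  have hm : 0 < m := Nat.pos_of_ne_zero fun hm => by simp [hm] at hl; exact hc.not_nil hl
  have hkc : k < c.length := by
    have := (egirth_le_length hc).trans_lt' hk; norm_cast at this; omega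
  have hkc' : k < c'.length := by
    have := (egirth_le_length hc').trans_lt' hk; norm_cast at this; omega
  have hu : u = u' := by simpa using h 0 hm
  subst hu
  have hsample : ∀ i ≤ m, c.getVert (i * k) = c'.getVert (i * k) := fun i hi => by
    rcases hi.lt_or_eq with hi | rfl
    · exact h i hi
    · rw [c.getVert_of_length_le hl, c'.getVert_of_length_le hl']
  refine List.eq_of_forall_take_drop_mul_eq (by simpa using hl) (by simpa using hl')
    fun i hi => ?_
  have hend : (c'.drop (i * k)).getVert k = (c.drop (i * k)).getVert k := by
    simpa [add_mul] using (hsample (i + 1) hi).symm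
  have hp := hc.isPath_take_drop (n := i * k) (k := k) (by omega)
  have hq := hc'.isPath_take_drop (n := i * k) (k := k) (by omega)
  have harc := hp.eq_of_length_add_length_lt_egirth
    (q := ((c'.drop (i * k)).take k).copy (hsample i hi.le).symm hend) (by simpa using hq)
    ((Nat.cast_le.mpr (by simp; omega)).trans_lt hk)
  simpa [edges_take, edges_drop] using congrArg edges harc

end Walk

def cycleEdgeFinsets [DecidableEq V] (G : SimpleGraph V) (L : ℕ) : Set (Finset (Sym2 V)) :=
  {S | ∃ (v : V) (c : G.Walk v v), c.IsCycle ∧ c.length ≤ L ∧ S = c.edges.toFinset}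

theorem card_cycleEdgeFinsets_le_pow [Fintype V] [DecidableEq V] {k m L : ℕ}
    (hk : ((2 * k : ℕ) : ℕ∞) < G.egirth) (hL : L ≤ m * k) :
    Nat.card (G.cycleEdgeFinsets L) ≤ Fintype.card V ^ m := by
  choose v c hc hlen hS using fun s : G.cycleEdgeFinsets L => s.2
  have hinj : Function.Injective fun s (i : Fin m) => (c s).getVert (i * k) := fun s s' h =>
    Subtype.ext <| by
      rw [hS s, hS s', (hc s).edges_eq_of_getVert_mul_eq (hc s') hk ((hlen s).trans hL)
        ((hlen s').trans hL) fun i hi => congrFun h ⟨i, hi⟩]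
  simpa using Nat.card_le_card_of_injective _ hinj

end SimpleGraph

theorem card_cycles_le_of_large_girth_general {V : Type*} [Fintype V] [DecidableEq V]
    (H : SimpleGraph V) (r : ℕ)
    (hgirth : ∀ (v : V) (c : H.Walk v v), c.IsCycle → r < c.length) :
    Nat.card {S : Finset (Sym2 V) // ∃ (v : V) (c : H.Walk v v), c.IsCycle ∧
        c.length ≤ (if Even r then 2 * r else 2 * r - 2) ∧ S = c.edges.toFinset} ≤
      (Fintype.card V) ^ 4 := by
  have h2k : ((2 * (r / 2) : ℕ) : ℕ∞) < H.egirth :=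
    (ENat.add_one_le_iff (ENat.natCast_ne_top _)).mp <| SimpleGraph.le_egirth.mpr
      fun v c hc => by have := hgirth v c hc; norm_cast; omega
  refine SimpleGraph.card_cycleEdgeFinsets_le_pow h2k ?_
  split_ifs with hr
  · obtain ⟨j, rfl⟩ := hr; omega
  · obtain ⟨j, rfl⟩ := Nat.not_even_iff_odd.mp hr; omega

/-- Let `H` be a simple graph with `n` nodes and `r ≥ 3` an integer such that `H` has no
cycle of length at most `r`.  Set `r' = 2r` if `r` is even and `r' = 2r - 2` if `r` is
odd.  Then `H` has at most `n⁴` cycles of length at most `r'`, where cycles are counted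
as subgraphs (identified here by their edge sets, which determine a cycle up to choice
of starting vertex and direction). -/
theorem card_cycles_le_of_large_girth {V : Type*} [Fintype V] [DecidableEq V]
    (H : SimpleGraph V) (r : ℕ) (hr : 3 ≤ r)
    (hgirth : ∀ (v : V) (c : H.Walk v v), c.IsCycle → r < c.length) :
    Nat.card {S : Finset (Sym2 V) // ∃ (v : V) (c : H.Walk v v), c.IsCycle ∧
        c.length ≤ (if Even r then 2 * r else 2 * r - 2) ∧ S = c.edges.toFinset} ≤
      (Fintype.card V) ^ 4 :=
  card_cycles_le_of_large_girth_general H r hgirth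
end

section
/- Let G = G_0 be a bipartite graph on n vertices having a perfect matching, let k ≥ 1, and let w_0, ..., w_{k−1} be positive integer weight functions on the edges of G. Define inductively G_{i+1} to be the subgraph of G_i consisting of the union of all perfect matchings of G_i of minimum w_i-weight. Let B be an integer exceeding the w_i-weight of every perfect matching of G for every i, and define the combined weight function w = Σ_{i=0}^{k−1} w_i · B^{k−1−i}. Then for every 1 ≤ i ≤ k, if M_1 is a perfect matching of G_i and M_2 is a perfect matching of G_{i−1} that contains an edge not in G_i, then w(M_1) < w(M_2). -/
/-- `M` is a perfect matching of the graph on vertex set `V` with edge set `F`: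
`M` consists of edges of `F` and every vertex lies in exactly one edge of `M`. -/
def IsPMof {V : Type*} (F M : Finset (Sym2 V)) : Prop :=
  M ⊆ F ∧ ∀ v : V, ∃! e, e ∈ M ∧ v ∈ e

/-!
In a bipartite graph, a perfect matching `M` each of whose edges lies in some minimum-weight
perfect matching is itself of minimum weight. Indeed, let `N` be a minimum perfect matching and
`P e ∋ e` minimum perfect matchings for `e ∈ M`, and view matchings as 0/1 adjacency matrices.
Then `N + ∑_{e ∈ M} P e - M` is nonnegative with all line sums `#M`, so by Birkhoff–von Neumann it
is `#M` times a convex combination of permutation matrices supported on the graph. The rows of one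
colour class of each of them form a perfect matching, of weight at least `w N`; measuring weights
on those rows gives `w N + #M * w N - w M ≥ #M * w N`, that is `w M ≤ w N`.

Consequently the perfect matchings of `G_{i+1}` are exactly the minimum `w_i`-weight perfect
matchings of `G_i`. So `M₁` and `M₂` have the same `w_j`-weight for `j < i - 1`, while
`w_{i-1}(M₁) < w_{i-1}(M₂)` because `M₂` is not a perfect matching of `G_i`; as all weights lie
in `[0, B)`, the base-`B` combination `w` compares them lexicographically.
-/

open Finset Matrix

section

variable {V : Type*} {c : V → Bool} {F F' A M : Finset (Sym2 V)} {w : Sym2 V → ℤ}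

def IsBipartiteBy (c : V → Bool) (F : Finset (Sym2 V)) : Prop :=
  ∀ u v, s(u, v) ∈ F → c u ≠ c v

def IsMinPMof (F : Finset (Sym2 V)) (w : Sym2 V → ℤ) (M : Finset (Sym2 V)) : Prop :=
  IsPMof F M ∧ ∀ M', IsPMof F M' → matchWeight w M ≤ matchWeight w M'

lemma IsBipartiteBy.mono (hF : IsBipartiteBy c F) (h : F' ⊆ F) : IsBipartiteBy c F' :=
  fun u v huv => hF u v (h huv)

lemma IsBipartiteBy.exists_eq_of_mem (hF : IsBipartiteBy c F) {e : Sym2 V} (he : e ∈ F) :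
    ∃ u v, c u = false ∧ e = s(u, v) := by
  induction e with
  | _ a b =>
    cases ha : c a
    · exact ⟨a, b, ha, rfl⟩
    · refine ⟨b, a, ?_, Sym2.eq_swap⟩
      simpa [ha] using hF a b he

lemma SimpleGraph.Colorable.exists_isBipartiteBy_edgeFinset [Fintype V] [DecidableEq V]
    {G : SimpleGraph V} [DecidableRel G.Adj] (hG : G.Colorable 2) :
    ∃ c : V → Bool, IsBipartiteBy c G.edgeFinset := by
  obtain ⟨C⟩ := hG
  refine ⟨fun v => decide (C v = 0), fun u v huv => ?_⟩
  show decide (C u = 0) ≠ decide (C v = 0)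
  have := C.valid (SimpleGraph.mem_edgeFinset.1 huv)
  revert this
  generalize C u = a; generalize C v = b
  revert a b
  decide

lemma IsPMof.mono (hA : IsPMof F' A) (h : F' ⊆ F) : IsPMof F A :=
  ⟨hA.1.trans h, hA.2⟩

lemma IsPMof.exists_isMinPMof (hA : IsPMof F A) : ∃ N, IsMinPMof F w N := by
  classical
  obtain ⟨N, hN, hmin⟩ := (F.powerset.filter (IsPMof F)).exists_min_image (matchWeight w)
    ⟨A, mem_filter.2 ⟨mem_powerset.2 hA.1, hA⟩⟩
  exact ⟨N, (mem_filter.1 hN).2, fun M hM => hmin M (mem_filter.2 ⟨mem_powerset.2 hM.1, hM⟩)⟩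

lemma IsMinPMof.matchWeight_eq {M' : Finset (Sym2 V)} (hM : IsMinPMof F w M)
    (hM' : IsMinPMof F w M') : matchWeight w M = matchWeight w M' :=
  le_antisymm (hM.2 M' hM'.1) (hM'.2 M hM.1)

lemma matchWeight_nonneg (hw : ∀ e, 0 ≤ w e) (M : Finset (Sym2 V)) : 0 ≤ matchWeight w M :=
  sum_nonneg fun e _ => hw e

lemma matchWeight_sum_mul (w : ℕ → Sym2 V → ℤ) (f : ℕ → ℤ) (s : Finset ℕ) (M : Finset (Sym2 V)) :
    matchWeight (fun e => ∑ j ∈ s, w j e * f j) M = ∑ j ∈ s, matchWeight (w j) M * f j := by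
  simp only [matchWeight, sum_mul]
  exact sum_comm

def edgeMatrix [DecidableEq V] (A : Finset (Sym2 V)) : Matrix V V ℚ :=
  Matrix.of fun u v => if s(u, v) ∈ A then 1 else 0

lemma edgeMatrix_comm [DecidableEq V] (A : Finset (Sym2 V)) (u v : V) :
    edgeMatrix A u v = edgeMatrix A v u := by
  simp [edgeMatrix, Sym2.eq_swap]

end

section Birkhoff

variable {V : Type*} [Fintype V] {c : V → Bool} {F F' A M : Finset (Sym2 V)} {w : Sym2 V → ℤ}

/-- Each edge of a bipartite edge set is counted once, from its endpoint of colour `false`. -/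
def leftCost (c : V → Bool) (w : Sym2 V → ℤ) : Matrix V V ℚ →ₗ[ℚ] ℚ where
  toFun Z := ∑ u with c u = false, ∑ v, Z u v * w s(u, v)
  map_add' Z Z' := by simp only [Matrix.add_apply, add_mul, sum_add_distrib]
  map_smul' a Z := by
    simp only [Matrix.smul_apply, smul_eq_mul, mul_assoc, mul_sum, RingHom.id_apply]

lemma leftCost_apply (Z : Matrix V V ℚ) :
    leftCost c w Z = ∑ u with c u = false, ∑ v, Z u v * w s(u, v) := rfl

variable [DecidableEq V]

lemma IsPMof.sum_edgeMatrix_row (hA : IsPMof F A) (u : V) : ∑ v, edgeMatrix A u v = 1 := by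
  obtain ⟨e, ⟨he, hue⟩, huniq⟩ := hA.2 u
  obtain ⟨x, rfl⟩ := Sym2.mem_iff_exists.1 hue
  have : ∀ v, s(u, v) ∈ A ↔ v = x := fun v =>
    ⟨fun h => Sym2.congr_right.1 (huniq _ ⟨h, Sym2.mem_mk_left u v⟩), fun h => h ▸ he⟩
  simp [edgeMatrix, this]

lemma IsPMof.sum_edgeMatrix_col (hA : IsPMof F A) (v : V) : ∑ u, edgeMatrix A u v = 1 := by
  simpa only [edgeMatrix_comm A _ v] using hA.sum_edgeMatrix_row v

lemma IsBipartiteBy.leftCost_edgeMatrix (hA : IsBipartiteBy c A) :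
    leftCost c w (edgeMatrix A) = matchWeight w A := by
  simp only [leftCost_apply, edgeMatrix, of_apply, ite_mul, one_mul, zero_mul, matchWeight,
    Int.cast_sum, ← sum_filter]
  rw [sum_sigma']
  refine sum_bij (fun p _ => s(p.1, p.2)) (fun p hp => (by simpa using hp : _ ∧ _).2) ?_ ?_
    (fun _ _ => rfl)
  · rintro ⟨u, v⟩ hp ⟨u', v'⟩ hp' h
    simp only [mem_sigma, mem_filter, mem_univ, true_and] at hp hp'
    rcases Sym2.eq_iff.1 h with ⟨rfl, rfl⟩ | ⟨rfl, rfl⟩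
    · rfl
    · exact absurd (hp'.1.trans hp.1.symm) (hA _ _ (by simpa [Sym2.eq_swap] using hp.2))
  · intro e he
    obtain ⟨u, v, hu, rfl⟩ := hA.exists_eq_of_mem he
    exact ⟨⟨u, v⟩, by simp [hu, he], rfl⟩

lemma IsBipartiteBy.isPMof_image_perm (hF : IsBipartiteBy c F) {τ : Equiv.Perm V}
    (hτ : ∀ u, s(u, τ u) ∈ F) :
    IsPMof F (({u | c u = false} : Finset V).image fun u => s(u, τ u)) := by
  have hc : ∀ u, c (τ u) = !c u := fun u => by
    have := hF u (τ u) (hτ u); revert this; cases c u <;> cases c (τ u) <;> simp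
  refine ⟨fun e he => ?_, fun v => existsUnique_of_exists_of_unique ?_ ?_⟩
  · obtain ⟨u, -, rfl⟩ := mem_image.1 he
    exact hτ u
  · cases hv : c v
    · exact ⟨s(v, τ v), mem_image.2 ⟨v, by simpa using hv, rfl⟩, Sym2.mem_mk_left _ _⟩
    · refine ⟨s(τ.symm v, v), mem_image.2 ⟨τ.symm v, ?_, by simp⟩, Sym2.mem_mk_right _ _⟩
      simpa [hv] using hc (τ.symm v)
  · rintro _ _ ⟨he, hve⟩ ⟨he', hve'⟩
    simp only [mem_image, mem_filter, mem_univ, true_and] at he he'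
    obtain ⟨u, hu, rfl⟩ := he
    obtain ⟨u', hu', rfl⟩ := he'
    rcases Sym2.mem_iff.1 hve with rfl | rfl <;> rcases Sym2.mem_iff.1 hve' with h | h
    · rw [h]
    · simp [h, hc, hu'] at hu
    · simp [← h, hc, hu] at hu'
    · rw [τ.injective h]

lemma IsBipartiteBy.leftCost_permMatrix (hF : IsBipartiteBy c F) {τ : Equiv.Perm V}
    (hτ : ∀ u, s(u, τ u) ∈ F) :
    leftCost c w (τ.permMatrix ℚ) =
      matchWeight w (({u | c u = false} : Finset V).image fun u => s(u, τ u)) := by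
  simp only [leftCost_apply, PEquiv.toMatrix_apply, Equiv.toPEquiv_apply, Option.mem_def,
    Option.some.injEq, ite_mul, one_mul, zero_mul, sum_ite_eq, mem_univ, if_true, matchWeight]
  rw [sum_image, Int.cast_sum]
  intro u hu u' hu' h
  simp only [coe_filter, mem_univ, true_and, Set.mem_ofPred_eq] at hu hu'
  rcases Sym2.eq_iff.1 h with ⟨h, -⟩ | ⟨rfl, -⟩
  · exact h
  · exact absurd (hu.trans hu'.symm) (hF u' _ (hτ u')).symm

lemma IsBipartiteBy.mul_le_leftCost (hF : IsBipartiteBy c F) {Y : Matrix V V ℚ} {s : ℚ}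
    (hs : 0 ≤ s) (hY : ∀ u v, 0 ≤ Y u v) (hrow : ∀ u, ∑ v, Y u v = s) (hcol : ∀ v, ∑ u, Y u v = s)
    (hsupp : ∀ u v, Y u v ≠ 0 → s(u, v) ∈ F) {N : Finset (Sym2 V)} (hN : IsMinPMof F w N) :
    s * matchWeight w N ≤ leftCost c w Y := by
  obtain ⟨D, hD, rfl⟩ := (exists_mem_doublyStochastic_eq_smul_iff hs).2 ⟨hY, hrow, hcol⟩
  rcases hs.eq_or_lt with rfl | hs
  · simp
  obtain ⟨a, ha, ha1, rfl⟩ := exists_eq_sum_perm_of_mem_doublyStochastic hD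
  have hperm : ∀ τ, a τ * matchWeight w N ≤ a τ * leftCost c w (τ.permMatrix ℚ) := by
    intro τ
    rcases (ha τ).eq_or_lt with hτ | hτ
    · simp [← hτ]
    have hτF : ∀ u, s(u, τ u) ∈ F := by
      refine fun u => hsupp u (τ u) (ne_of_gt ?_)
      have hentry : a τ ≤ ∑ σ, a σ * σ.permMatrix ℚ u (τ u) := by
        calc a τ = a τ * τ.permMatrix ℚ u (τ u) := by simp
          _ ≤ _ := single_le_sum (f := fun σ => a σ * σ.permMatrix ℚ u (τ u))
            (fun σ _ => mul_nonneg (ha σ)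
              (nonneg_of_mem_doublyStochastic permMatrix_mem_doublyStochastic))
            (mem_univ τ)
      simpa [Matrix.sum_apply] using mul_pos hs (hτ.trans_le hentry)
    rw [hF.leftCost_permMatrix hτF]
    exact mul_le_mul_of_nonneg_left (by exact_mod_cast hN.2 _ (hF.isPMof_image_perm hτF)) hτ.le
  calc s * matchWeight w N = s * ∑ τ, a τ * matchWeight w N := by rw [← sum_mul, ha1, one_mul]
    _ ≤ s * ∑ τ, a τ * leftCost c w (τ.permMatrix ℚ) :=
      mul_le_mul_of_nonneg_left (sum_le_sum fun τ _ => hperm τ) hs.le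
    _ = leftCost c w (s • ∑ τ, a τ • τ.permMatrix ℚ) := by simp [map_sum]

theorem IsBipartiteBy.isMinPMof_of_forall_mem (hF : IsBipartiteBy c F) (hM : IsPMof F M)
    (hMU : ∀ e ∈ M, ∃ P, IsMinPMof F w P ∧ e ∈ P) : IsMinPMof F w M := by
  refine ⟨hM, fun Q hQ => ?_⟩
  obtain ⟨N, hN⟩ := hQ.exists_isMinPMof (w := w)
  choose! P hP using hMU
  set Y := edgeMatrix N + ∑ e ∈ M, edgeMatrix (P e) - edgeMatrix M
  have hY : ∀ u v, 0 ≤ Y u v := by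
    intro u v
    have hE : ∀ A, 0 ≤ edgeMatrix A u v := fun A => by
      simp only [edgeMatrix, of_apply]; split_ifs <;> norm_num
    have hcover : edgeMatrix M u v ≤ ∑ e ∈ M, edgeMatrix (P e) u v := by
      by_cases h : s(u, v) ∈ M
      · calc edgeMatrix M u v = edgeMatrix (P s(u, v)) u v := by simp [edgeMatrix, h, (hP _ h).2]
          _ ≤ _ := single_le_sum (fun e _ => hE (P e)) h
      · rw [show edgeMatrix M u v = 0 from if_neg h]
        exact sum_nonneg fun e _ => hE (P e)
    simp only [Y, Matrix.sub_apply, Matrix.add_apply, Matrix.sum_apply]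
    linarith [hE N]
  have hrow : ∀ u, ∑ v, Y u v = #M := by
    intro u
    simp only [Y, Matrix.sub_apply, Matrix.add_apply, Matrix.sum_apply, sum_sub_distrib,
      sum_add_distrib]
    rw [sum_comm, hN.1.sum_edgeMatrix_row, hM.sum_edgeMatrix_row,
      sum_congr rfl fun e he => (hP e he).1.1.sum_edgeMatrix_row u]
    simp
  have hcol : ∀ v, ∑ u, Y u v = #M := fun v => by
    simpa [Y, Matrix.sum_apply, edgeMatrix_comm _ _ v] using hrow v
  have hsupp : ∀ u v, Y u v ≠ 0 → s(u, v) ∈ F := by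
    intro u v
    contrapose!
    intro huv
    have hzero : ∀ A ⊆ F, edgeMatrix A u v = 0 := fun A hA => if_neg fun h => huv (hA h)
    simp [Y, Matrix.sum_apply, hzero N hN.1.1, hzero M hM.1,
      sum_eq_zero fun e he => hzero (P e) (hP e he).1.1.1]
  have hcost : leftCost c w Y = matchWeight w N + #M * matchWeight w N - matchWeight w M := by
    simp only [Y, map_add, map_sub, map_sum, (hF.mono hN.1.1).leftCost_edgeMatrix,
      (hF.mono hM.1).leftCost_edgeMatrix]
    rw [sum_congr rfl fun e he => ((hF.mono (hP e he).1.1.1).leftCost_edgeMatrix).trans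
      (congrArg _ ((hP e he).1.matchWeight_eq hN))]
    simp
  have hbound := hF.mul_le_leftCost (Nat.cast_nonneg _) hY hrow hcol hsupp hN
  rw [hcost] at hbound
  have : (matchWeight w M : ℚ) ≤ matchWeight w N := by linarith
  exact (Int.cast_le.1 this).trans (hN.2 Q hQ)

lemma IsBipartiteBy.isPMof_iff_isMinPMof (hF : IsBipartiteBy c F)
    (hF' : ∀ e, e ∈ F' ↔ ∃ M, IsMinPMof F w M ∧ e ∈ M) : IsPMof F' A ↔ IsMinPMof F w A := by
  refine ⟨fun hA => ?_, fun hA => ⟨fun e he => (hF' e).2 ⟨A, hA, he⟩, hA.1.2⟩⟩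
  have hAU : ∀ e ∈ A, ∃ M, IsMinPMof F w M ∧ e ∈ M := fun e he => (hF' e).1 (hA.1 he)
  refine hF.isMinPMof_of_forall_mem ⟨fun e he => ?_, hA.2⟩ hAU
  obtain ⟨M, hM, heM⟩ := hAU e he
  exact hM.1.1 heM

end Birkhoff

lemma subset_zero_of_succ_subset {α : Type*} {E : ℕ → Finset α} {k : ℕ}
    (hE : ∀ j < k, E (j + 1) ⊆ E j) {j : ℕ} (hj : j ≤ k) : E j ⊆ E 0 := by
  induction j with
  | zero => exact subset_rfl
  | succ j ih => exact (hE j (by omega)).trans (ih (by omega))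

lemma matchWeight_eq_of_isPMof {V : Type*} {E : ℕ → Finset (Sym2 V)} {w : ℕ → Sym2 V → ℤ}
    {k : ℕ} (hstep : ∀ j < k, ∀ A, IsPMof (E (j + 1)) A ↔ IsMinPMof (E j) (w j) A)
    {j : ℕ} (hj : j ≤ k) {A A' : Finset (Sym2 V)} (hA : IsPMof (E j) A) (hA' : IsPMof (E j) A')
    {i : ℕ} (hi : i < j) : matchWeight (w i) A = matchWeight (w i) A' := by
  induction j generalizing A A' with
  | zero => omega
  | succ j ih =>
    have hA := (hstep j (by omega) A).1 hA
    have hA' := (hstep j (by omega) A').1 hA'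
    rcases Nat.lt_succ_iff_lt_or_eq.1 hi with hi | rfl
    · exact ih (by omega) hA.1 hA'.1 hi
    · exact hA.matchWeight_eq hA'

lemma sum_range_succ_mul_pow (d : ℕ → ℤ) (B : ℤ) (n : ℕ) :
    ∑ j ∈ range (n + 1), d j * B ^ (n + 1 - 1 - j) =
      B * ∑ j ∈ range n, d j * B ^ (n - 1 - j) + d n := by
  rw [sum_range_succ, mul_sum]
  congr 1
  · refine sum_congr rfl fun j hj => ?_
    rw [show n + 1 - 1 - j = n - 1 - j + 1 by have := mem_range.1 hj; omega, pow_succ]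
    ring
  · simp

lemma sum_range_mul_pow_pos {B : ℤ} (hB : 0 ≤ B) {d : ℕ → ℤ} {m k : ℕ} (hmk : m < k)
    (hlow : ∀ j < m, d j = 0) (hm : 0 < d m) (hhigh : ∀ j, m < j → j < k → 1 - B ≤ d j) :
    0 < ∑ j ∈ range k, d j * B ^ (k - 1 - j) := by
  induction k, hmk using Nat.le_induction with
  | base =>
    rw [sum_range_succ_mul_pow, sum_eq_zero fun j hj => by simp [hlow j (mem_range.1 hj)]]
    simpa using hm
  | succ n hn ih =>
    rw [sum_range_succ_mul_pow]
    have := ih fun j hj hjn => hhigh j hj (by omega)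
    have := hhigh n hn (by omega)
    nlinarith

theorem weight_lt_of_matching_in_next_graph_general {V : Type*} [Fintype V] [DecidableEq V]
    (G : SimpleGraph V) [DecidableRel G.Adj] (hbip : G.Colorable 2)
    (k : ℕ)
    (w : ℕ → Sym2 V → ℤ) (hwpos : ∀ i < k, ∀ e, 0 < w i e)
    (E : ℕ → Finset (Sym2 V))
    (hE0 : E 0 = G.edgeFinset)
    (hEsucc : ∀ i < k, ∀ e, e ∈ E (i + 1) ↔
      ∃ M, IsPMof (E i) M ∧
        (∀ M', IsPMof (E i) M' → matchWeight (w i) M ≤ matchWeight (w i) M') ∧ e ∈ M)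
    (B : ℤ) (hB : ∀ i < k, ∀ M, IsPMof (E 0) M → matchWeight (w i) M < B)
    (i : ℕ) (hi1 : 1 ≤ i) (hik : i ≤ k)
    (M₁ M₂ : Finset (Sym2 V))
    (hM₁ : IsPMof (E i) M₁) (hM₂ : IsPMof (E (i - 1)) M₂)
    (hM₂out : ∃ e ∈ M₂, e ∉ E i) :
    matchWeight (fun e => ∑ j ∈ Finset.range k, w j e * B ^ (k - 1 - j)) M₁ <
      matchWeight (fun e => ∑ j ∈ Finset.range k, w j e * B ^ (k - 1 - j)) M₂ := by
  obtain ⟨m, rfl⟩ : ∃ m, i = m + 1 := ⟨i - 1, by omega⟩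
  rw [Nat.add_sub_cancel] at hM₂
  obtain ⟨c, hc⟩ := hbip.exists_isBipartiteBy_edgeFinset
  have hsub : ∀ j ≤ k, E j ⊆ E 0 := fun j => subset_zero_of_succ_subset fun j hj e he => by
    obtain ⟨M, hM, -, heM⟩ := (hEsucc j hj e).1 he
    exact hM.1 heM
  have hstep : ∀ j < k, ∀ A, IsPMof (E (j + 1)) A ↔ IsMinPMof (E j) (w j) A := fun j hj A =>
    (hc.mono (hE0 ▸ hsub j hj.le)).isPMof_iff_isMinPMof fun e =>
      (hEsucc j hj e).trans (by simp only [IsMinPMof, and_assoc])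
  have hM₁min := (hstep m hik M₁).1 hM₁
  have hlt : matchWeight (w m) M₁ < matchWeight (w m) M₂ := by
    obtain ⟨e, he, heout⟩ := hM₂out
    by_contra! hle
    exact heout ((hEsucc m hik e).2 ⟨M₂, hM₂, fun M' hM' => hle.trans (hM₁min.2 M' hM'), he⟩)
  have hB₁ : ∀ j < k, matchWeight (w j) M₁ < B := fun j hj => hB j hj M₁ (hM₁.mono (hsub _ hik))
  have hw₂ : ∀ j < k, 0 ≤ matchWeight (w j) M₂ := fun j hj =>
    matchWeight_nonneg (fun e => (hwpos j hj e).le) M₂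
  have hB₀ : 0 ≤ B :=
    ((matchWeight_nonneg (fun e => (hwpos 0 (by omega) e).le) M₁).trans_lt (hB₁ 0 (by omega))).le
  rw [matchWeight_sum_mul, matchWeight_sum_mul, ← sub_pos, ← sum_sub_distrib]
  simp only [← sub_mul]
  refine sum_range_mul_pow_pos hB₀ hik
    (fun j hj => ?_) (sub_pos.2 hlt) fun j _ hj => ?_
  · rw [matchWeight_eq_of_isPMof hstep (by omega) hM₁min.1 hM₂ hj, sub_self]
  · linarith [hB₁ j hj, hw₂ j hj]

/-- Let `G = G₀` be a bipartite graph with a perfect matching, `k ≥ 1`, and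
`w₀, …, w_{k-1}` positive integer weight functions on its edges.  Let `G_{i+1}` be the
subgraph of `G_i` formed by the union of all perfect matchings of `G_i` of minimum
`w_i`-weight (here the edge sets `E i` of the graphs `G_i`).  Let `B` exceed the
`w_i`-weight of every perfect matching of `G` for every `i < k`, and let
`w = ∑_i w_i · B^(k-1-i)`.  Then for `1 ≤ i ≤ k`, any perfect matching `M₁` of `G_i`
has strictly smaller `w`-weight than any perfect matching `M₂` of `G_{i-1}` containing
an edge not in `G_i`. -/
theorem weight_lt_of_matching_in_next_graph {V : Type*} [Fintype V] [DecidableEq V]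
    (G : SimpleGraph V) [DecidableRel G.Adj] (hbip : G.Colorable 2)
    (k : ℕ) (hk : 1 ≤ k)
    (w : ℕ → Sym2 V → ℤ) (hwpos : ∀ i < k, ∀ e, 0 < w i e)
    (E : ℕ → Finset (Sym2 V))
    (hE0 : E 0 = G.edgeFinset)
    (hpm : ∃ M, IsPMof (E 0) M)
    (hEsucc : ∀ i < k, ∀ e, e ∈ E (i + 1) ↔
      ∃ M, IsPMof (E i) M ∧
        (∀ M', IsPMof (E i) M' → matchWeight (w i) M ≤ matchWeight (w i) M') ∧ e ∈ M)
    (B : ℤ) (hB : ∀ i < k, ∀ M, IsPMof (E 0) M → matchWeight (w i) M < B)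
    (i : ℕ) (hi1 : 1 ≤ i) (hik : i ≤ k)
    (M₁ M₂ : Finset (Sym2 V))
    (hM₁ : IsPMof (E i) M₁) (hM₂ : IsPMof (E (i - 1)) M₂)
    (hM₂out : ∃ e ∈ M₂, e ∉ E i) :
    matchWeight (fun e => ∑ j ∈ Finset.range k, w j e * B ^ (k - 1 - j)) M₁ <
      matchWeight (fun e => ∑ j ∈ Finset.range k, w j e * B ^ (k - 1 - j)) M₂ :=
  weight_lt_of_matching_in_next_graph_general G hbip k w hwpos E hE0 hEsucc B hB i hi1 hik M₁ M₂ hM₁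
    hM₂ hM₂out
end

section
/- Let G be a graph with n ≥ 2 nodes whose edges are enumerated e_1, ..., e_m, define w(e_i) = 2^{i−1}, let s ≥ 1, and set t = n³s. If a prime p is chosen uniformly at random among the first t primes, then for any s even cycles C_1, ..., C_s in G, with probability at least 1 − 1/n one has c_w(C_i) ≢ 0 (mod p) for all 1 ≤ i ≤ s; consequently the weight function e_i ↦ (2^{i−1} mod p) gives nonzero circulation to each of C_1, ..., C_s with probability at least 1 − 1/n. -/
lemma altSum_map_emod (p : ℤ) (l : List ℤ) :
    p ∣ altSum (l.map (· % p)) - altSum l := by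
  induction l with
  | nil => simp [altSum]
  | cons a t ih =>
    simp only [List.map_cons, altSum]
    have h1 : p ∣ a % p - a := ⟨-(a / p), by rw [Int.emod_def]; ring⟩
    have h2 : a % p - altSum (t.map (· % p)) - (a - altSum t)
        = (a % p - a) - (altSum (t.map (· % p)) - altSum t) := by ring
    rw [h2]; exact dvd_sub h1 ih

lemma altSum_eq_sum (l : List ℤ) :
    altSum l = ∑ i ∈ Finset.range l.length, (-1 : ℤ) ^ i * l.getD i 0 := by
  induction l with
  | nil => simp [altSum]
  | cons a t ih =>
    rw [altSum, ih, List.length_cons, Finset.sum_range_succ']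
    simp [pow_succ, mul_comm, mul_assoc]
    rw [neg_add_eq_sub]

lemma abs_altSum_le (l : List ℤ) : |altSum l| ≤ (l.map (|·|)).sum := by
  induction l with
  | nil => simp [altSum]
  | cons a t ih =>
    simp only [altSum, List.map_cons, List.sum_cons]
    calc |a - altSum t| ≤ |a| + |altSum t| := abs_sub _ _
      _ ≤ |a| + (t.map (|·|)).sum := by linarith

lemma altSum_two_pow_ne_zero (l : List ℕ) (hne : l ≠ []) (hnd : l.Nodup) :
    altSum (l.map fun a => (2 : ℤ) ^ a) ≠ 0 := by
  intro h0
  have hlen : (l.map fun a => (2 : ℤ) ^ a).length = l.length := l.length_map _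
  rw [altSum_eq_sum, hlen] at h0
  have hterm : ∀ (i : ℕ) (hi : i < l.length),
      ((l.map fun a => (2 : ℤ) ^ a).getD i 0) = 2 ^ l.get ⟨i, hi⟩ := by
    intro i hi
    rw [List.getD_eq_getElem _ _ (by simpa using hi)]
    simp
  have hfs : l.toFinset.Nonempty := by
    simpa [List.toFinset_nonempty_iff] using hne
  set a := l.toFinset.min' hfs with ha
  have hamem : a ∈ l := by
    have := l.toFinset.min'_mem hfs; simpa using this
  obtain ⟨⟨i₀, hi₀⟩, hget⟩ := List.mem_iff_get.mp hamem
  have hsplit := Finset.add_sum_erase (Finset.range l.length)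
    (fun i => (-1 : ℤ) ^ i * (l.map fun a => (2 : ℤ) ^ a).getD i 0)
    (Finset.mem_range.mpr hi₀)
  rw [h0] at hsplit
  have hdvd : (2 : ℤ) ^ (a + 1) ∣
      ∑ i ∈ (Finset.range l.length).erase i₀,
        (-1 : ℤ) ^ i * (l.map fun a => (2 : ℤ) ^ a).getD i 0 := by
    apply Finset.dvd_sum
    intro i hi
    have hi' : i < l.length := Finset.mem_range.mp (Finset.mem_of_mem_erase hi)
    have hnei : i ≠ i₀ := Finset.ne_of_mem_erase hi
    have h1 : l.get ⟨i, hi'⟩ ≠ a := by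
      intro h
      apply hnei
      have h2 : l.get ⟨i, hi'⟩ = l.get ⟨i₀, hi₀⟩ := h.trans hget.symm
      have := List.Nodup.get_inj_iff hnd |>.mp h2
      exact congrArg Fin.val this
    have h2 : a ≤ l.get ⟨i, hi'⟩ := Finset.min'_le _ _ (by simp [List.mem_toFinset, List.get_mem])
    have h3 : a + 1 ≤ l.get ⟨i, hi'⟩ := by omega
    rw [hterm i hi']
    exact Dvd.dvd.mul_left (pow_dvd_pow 2 h3) _
  have hf0 : (2 : ℤ) ^ (a + 1) ∣ (-1 : ℤ) ^ i₀ * 2 ^ a := by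
    have : (-1 : ℤ) ^ i₀ * (l.map fun a => (2 : ℤ) ^ a).getD i₀ 0 =
        - ∑ i ∈ (Finset.range l.length).erase i₀,
          (-1 : ℤ) ^ i * (l.map fun a => (2 : ℤ) ^ a).getD i 0 := by
      beta_reduce at hsplit
      linarith
    rw [hterm i₀ hi₀, hget] at this
    rw [this]
    exact hdvd.neg_right
  have hf1 : (2 : ℤ) ^ (a + 1) ∣ 2 ^ a := by
    have h4 : (2 : ℤ) ^ a = (-1 : ℤ) ^ i₀ * ((-1 : ℤ) ^ i₀ * 2 ^ a) := by
      rw [← mul_assoc, ← pow_add, ← two_mul, pow_mul]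
      norm_num
    rw [h4]
    exact hf0.mul_left _
  have h5 : (2 : ℤ) ^ (a + 1) ≤ 2 ^ a :=
    Int.le_of_dvd (by positivity) hf1
  have h6 : (2 : ℤ) ^ a < 2 ^ (a + 1) := by
    apply pow_lt_pow_right₀ (by norm_num) (by omega)
  linarith

lemma card_dvd_le {t M : ℕ} (A : ℤ) (hA : A ≠ 0) (hbound : A.natAbs < 2 ^ M) :
    (Finset.univ.filter fun j : Fin t => ((Nat.nth Nat.Prime j : ℤ) ∣ A)).card ≤ M := by
  classical
  set S := Finset.univ.filter fun j : Fin t => ((Nat.nth Nat.Prime j : ℤ) ∣ A) with hS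
  set P := S.image fun j : Fin t => Nat.nth Nat.Prime j.val with hP
  have hcard : P.card = S.card :=
    Finset.card_image_of_injOn (fun x _ y _ h =>
      Fin.val_injective ((Nat.nth_injective Nat.infinite_setOf_prime) h))
  have hdvd : ∏ p ∈ P, p ∣ A.natAbs := by
    apply Finset.prod_primes_dvd
    · intro p hp
      obtain ⟨j, _, rfl⟩ := Finset.mem_image.mp hp
      exact (Nat.prime_nth_prime j.val).prime
    · intro p hp
      obtain ⟨j, hj, rfl⟩ := Finset.mem_image.mp hp
      have h := (Finset.mem_filter.mp hj).2
      exact Int.natCast_dvd.mp h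
  have h2 : 2 ^ S.card ≤ ∏ p ∈ P, p := by
    rw [← hcard]
    exact Finset.pow_card_le_prod P _ 2 (fun p hp => by
      obtain ⟨j, _, rfl⟩ := Finset.mem_image.mp hp
      exact (Nat.prime_nth_prime j.val).two_le)
  have h3 : ∏ p ∈ P, p ≤ A.natAbs := Nat.le_of_dvd (Int.natAbs_pos.mpr hA) hdvd
  have h4 : 2 ^ S.card < 2 ^ M := lt_of_le_of_lt (le_trans h2 h3) hbound
  have := (Nat.pow_lt_pow_iff_right (by norm_num : 1 < 2)).mp h4
  omega

lemma geom_two_sum (M : ℕ) : ∑ i ∈ Finset.range M, (2 : ℤ) ^ i = 2 ^ M - 1 := by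
  induction M with
  | zero => simp
  | succ M ih => rw [Finset.sum_range_succ, ih]; ring

/-- Let `G` be a graph with `n ≥ 2` nodes whose edges are enumerated `e₁, …, e_m`
(via an injective numbering `num` with values `< m`), give edge `eᵢ` the weight
`2^(i-1)`, let `s ≥ 1`, and set `t = n³s`.  If a prime `p` is chosen uniformly at random
among the first `t` primes, then for any `s` even cycles `C₁, …, C_s` of `G`, with
probability at least `1 - 1/n` no circulation `c_w(Cᵢ)` is divisible by `p`, and hence
the weight function `eᵢ ↦ 2^(i-1) mod p` gives nonzero circulation to each `Cᵢ`:
at least a `(1 - 1/n)`-fraction of the first `t` primes have this property. -/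
theorem random_prime_nonzero_circulation {V : Type*} [Fintype V] [DecidableEq V]
    (G : SimpleGraph V) [DecidableRel G.Adj]
    (hn : 2 ≤ Fintype.card V)
    (num : Sym2 V → ℕ)
    (hinj : Set.InjOn num G.edgeSet)
    (hlt : ∀ e ∈ G.edgeSet, num e < G.edgeFinset.card)
    (s : ℕ) (hs : 1 ≤ s)
    (C : Fin s → Σ v : V, G.Walk v v)
    (hcyc : ∀ i, (C i).2.IsCycle)
    (heven : ∀ i, Even (C i).2.length) :
    (Fintype.card V - 1) * ((Fintype.card V) ^ 3 * s) ≤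
      Fintype.card V *
        Nat.card {j : Fin ((Fintype.card V) ^ 3 * s) //
          ∀ i : Fin s,
            ¬ ((Nat.nth Nat.Prime j : ℤ) ∣
                altSum ((C i).2.edges.map fun e => (2 : ℤ) ^ num e)) ∧
            circulation (fun e => ((2 : ℤ) ^ num e) % (Nat.nth Nat.Prime j : ℤ))
              (C i).2.edges ≠ 0} := by
  classical
  set n := Fintype.card V with hn'
  set t := n ^ 3 * s with ht'
  set A : Fin s → ℤ := fun i => altSum ((C i).2.edges.map fun e => (2 : ℤ) ^ num e) with hA
  have hedges : ∀ i, ∀ e ∈ (C i).2.edges, e ∈ G.edgeSet :=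
    fun i e he => (C i).2.edges_subset_edgeSet he
  have hnodup : ∀ i, ((C i).2.edges.map num).Nodup := fun i =>
    ((hcyc i).edges_nodup).map_on (fun x hx y hy h => hinj (hedges i x hx) (hedges i y hy) h)
  have hnonnil : ∀ i, (C i).2.edges ≠ [] := by
    intro i h
    have h3 := (hcyc i).three_le_length
    have h4 : (C i).2.edges.length = (C i).2.length := (C i).2.length_edges
    rw [h] at h4
    simp at h4
    omega
  have hAne : ∀ i, A i ≠ 0 := by
    intro i
    have h := altSum_two_pow_ne_zero ((C i).2.edges.map num)
      (by simp [hnonnil i]) (hnodup i)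
    rw [List.map_map] at h
    exact h
  have hmn : G.edgeFinset.card ≤ n ^ 2 := by
    calc G.edgeFinset.card ≤ n.choose 2 := SimpleGraph.card_edgeFinset_le_card_choose_two
      _ ≤ n * (n - 1) := by rw [Nat.choose_two_right]; exact Nat.div_le_self _ _
      _ ≤ n * n := Nat.mul_le_mul_left _ (Nat.sub_le _ _)
      _ = n ^ 2 := (sq n).symm
  have hAbound : ∀ i, (A i).natAbs < 2 ^ (n ^ 2) := by
    intro i
    have habs := abs_altSum_le ((C i).2.edges.map fun e => (2 : ℤ) ^ num e)
    rw [List.map_map] at habs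
    have hmapeq : ((C i).2.edges.map ((|·|) ∘ fun e => (2 : ℤ) ^ num e)) =
        (((C i).2.edges.map num).map fun a => (2 : ℤ) ^ a) := by
      rw [List.map_map]
      exact List.map_congr_left fun e _ => by
        simp [Function.comp, abs_of_nonneg (pow_nonneg (by norm_num : (0:ℤ) ≤ 2) _)]
    rw [hmapeq, ← List.sum_toFinset _ (hnodup i)] at habs
    have hsub : ((C i).2.edges.map num).toFinset ⊆ Finset.range (n ^ 2) := by
      intro a ha
      rw [List.mem_toFinset] at ha
      obtain ⟨e, he, rfl⟩ := List.mem_map.mp ha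
      exact Finset.mem_range.mpr (lt_of_lt_of_le (hlt e (hedges i e he)) hmn)
    have hle : (((C i).2.edges.map num).toFinset.sum fun a => (2 : ℤ) ^ a) ≤
        ∑ a ∈ Finset.range (n ^ 2), (2 : ℤ) ^ a :=
      Finset.sum_le_sum_of_subset_of_nonneg hsub
        (fun a _ _ => pow_nonneg (by norm_num) _)
    rw [geom_two_sum] at hle
    have : |A i| < 2 ^ (n ^ 2) := by
      calc |A i| ≤ _ := habs
        _ ≤ (2 : ℤ) ^ (n ^ 2) - 1 := hle
        _ < 2 ^ (n ^ 2) := by linarith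
    have h2 : ((A i).natAbs : ℤ) < ((2 ^ (n ^ 2) : ℕ) : ℤ) := by
      rw [Int.natCast_natAbs]; push_cast; exact this
    exact_mod_cast h2
  -- the "good" predicate
  set Q : Fin t → Prop := fun j => ∀ i, ¬ ((Nat.nth Nat.Prime j : ℤ) ∣ A i) with hQ
  have hQP : ∀ j : Fin t, Q j →
      (∀ i : Fin s,
        ¬ ((Nat.nth Nat.Prime j : ℤ) ∣
            altSum ((C i).2.edges.map fun e => (2 : ℤ) ^ num e)) ∧
        circulation (fun e => ((2 : ℤ) ^ num e) % (Nat.nth Nat.Prime j : ℤ))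
          (C i).2.edges ≠ 0) := by
    intro j hj i
    refine ⟨hj i, ?_⟩
    intro hcirc
    apply hj i
    rw [circulation, abs_eq_zero] at hcirc
    have hml : ((C i).2.edges.map fun e => ((2 : ℤ) ^ num e) % (Nat.nth Nat.Prime j : ℤ)) =
        (((C i).2.edges.map fun e => (2 : ℤ) ^ num e).map (· % (Nat.nth Nat.Prime j : ℤ))) := by
      rw [List.map_map]; rfl
    rw [hml] at hcirc
    have hd := altSum_map_emod (Nat.nth Nat.Prime j : ℤ)
      ((C i).2.edges.map fun e => (2 : ℤ) ^ num e)
    rw [hcirc, zero_sub] at hd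
    exact (dvd_neg.mp hd)
  have hcardeq : Nat.card {j : Fin t //
      ∀ i : Fin s,
        ¬ ((Nat.nth Nat.Prime j : ℤ) ∣
            altSum ((C i).2.edges.map fun e => (2 : ℤ) ^ num e)) ∧
        circulation (fun e => ((2 : ℤ) ^ num e) % (Nat.nth Nat.Prime j : ℤ))
          (C i).2.edges ≠ 0} =
      (Finset.univ.filter fun j : Fin t =>
        ∀ i : Fin s,
          ¬ ((Nat.nth Nat.Prime j : ℤ) ∣
              altSum ((C i).2.edges.map fun e => (2 : ℤ) ^ num e)) ∧
          circulation (fun e => ((2 : ℤ) ^ num e) % (Nat.nth Nat.Prime j : ℤ))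
            (C i).2.edges ≠ 0).card := by
    rw [Nat.card_eq_fintype_card, Fintype.card_subtype]
  have hfilter : (Finset.univ.filter Q).card ≤
      (Finset.univ.filter fun j : Fin t =>
        ∀ i : Fin s,
          ¬ ((Nat.nth Nat.Prime j : ℤ) ∣
              altSum ((C i).2.edges.map fun e => (2 : ℤ) ^ num e)) ∧
          circulation (fun e => ((2 : ℤ) ^ num e) % (Nat.nth Nat.Prime j : ℤ))
            (C i).2.edges ≠ 0).card := by
    apply Finset.card_le_card
    intro j hj
    rw [Finset.mem_filter] at hj ⊢
    exact ⟨hj.1, hQP j hj.2⟩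
  have hbad : (Finset.univ.filter fun j : Fin t => ¬ Q j).card ≤ s * n ^ 2 := by
    have hsub : (Finset.univ.filter fun j : Fin t => ¬ Q j) ⊆
        Finset.univ.biUnion (fun i : Fin s =>
          Finset.univ.filter fun j : Fin t => ((Nat.nth Nat.Prime j : ℤ) ∣ A i)) := by
      intro j hj
      have hj' := (Finset.mem_filter.mp hj).2
      simp only [hQ, not_forall, not_not] at hj'
      obtain ⟨i, hi⟩ := hj'
      exact Finset.mem_biUnion.mpr ⟨i, Finset.mem_univ i, Finset.mem_filter.mpr ⟨Finset.mem_univ j, hi⟩⟩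
    calc (Finset.univ.filter fun j : Fin t => ¬ Q j).card
        ≤ (Finset.univ.biUnion (fun i : Fin s =>
            Finset.univ.filter fun j : Fin t => ((Nat.nth Nat.Prime j : ℤ) ∣ A i))).card :=
          Finset.card_le_card hsub
      _ ≤ ∑ i : Fin s, (Finset.univ.filter fun j : Fin t =>
            ((Nat.nth Nat.Prime j : ℤ) ∣ A i)).card := Finset.card_biUnion_le
      _ ≤ ∑ _i : Fin s, n ^ 2 :=
          Finset.sum_le_sum (fun i _ => card_dvd_le (A i) (hAne i) (hAbound i))
      _ = s * n ^ 2 := by simp [mul_comm]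
  have hcompl : (Finset.univ.filter Q).card +
      (Finset.univ.filter fun j : Fin t => ¬ Q j).card = t := by
    rw [Finset.card_filter_add_card_filter_not]
    simp
  have hmulbad : n * (Finset.univ.filter fun j : Fin t => ¬ Q j).card ≤ t := by
    calc n * (Finset.univ.filter fun j : Fin t => ¬ Q j).card
        ≤ n * (s * n ^ 2) := Nat.mul_le_mul_left _ hbad
      _ = t := by rw [ht']; ring
  have hsplit2 : n * (Finset.univ.filter Q).card +
      n * (Finset.univ.filter fun j : Fin t => ¬ Q j).card = n * t := by
    rw [← Nat.mul_add, hcompl]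
  have hnt : n * t ≤ n * (Finset.univ.filter Q).card + t := by linarith
  calc (n - 1) * t = n * t - t := by rw [Nat.sub_one_mul]
    _ ≤ n * (Finset.univ.filter Q).card := Nat.sub_le_iff_le_add.mpr hnt
    _ ≤ n * _ := Nat.mul_le_mul_left _ (hcardeq ▸ hfilter)
end

section
/- Let G be a bipartite graph with vertex parts L = {u_1,...,u_N} and R = {v_1,...,v_N}, let w be a natural-number weight function on its edges that is isolating for G, and let A be the N×N integer matrix with A(i,j) = 2^{w(u_i,v_j)} if (u_i,v_j) is an edge of G and A(i,j) = 0 otherwise. Then det(A) ≠ 0 if and only if G has a perfect matching. -/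
/-- A weight function `w` is isolating for the bipartite graph on parts
`{u₁, …, u_N}`, `{v₁, …, v_N}` with adjacency relation `adj` if there is at most one
minimum-weight perfect matching; perfect matchings are identified with permutations `σ`
of `[N]` such that `adj i (σ i)` for all `i`. -/
def BipIsolating {N : ℕ} (adj : Fin N → Fin N → Prop) (w : Fin N → Fin N → ℕ) : Prop :=
  ∀ σ τ : Equiv.Perm (Fin N), (∀ i, adj i (σ i)) → (∀ i, adj i (τ i)) →
    (∀ ρ : Equiv.Perm (Fin N), (∀ i, adj i (ρ i)) →
      ∑ i, w i (σ i) ≤ ∑ i, w i (ρ i)) →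
    (∀ ρ : Equiv.Perm (Fin N), (∀ i, adj i (ρ i)) →
      ∑ i, w i (τ i) ≤ ∑ i, w i (ρ i)) →
    σ = τ

private lemma det_expand (N : ℕ)
    (adj : Fin N → Fin N → Prop) [DecidableRel adj]
    (w : Fin N → Fin N → ℕ) :
    (Matrix.of fun i j : Fin N => if adj i j then (2 : ℤ) ^ w i j else 0).det =
      ∑ σ : Equiv.Perm (Fin N),
        if ∀ i, adj i (σ i) then (Equiv.Perm.sign σ : ℤ) * 2 ^ (∑ i, w i (σ i)) else 0 := by
  set A : Matrix (Fin N) (Fin N) ℤ :=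
    Matrix.of fun i j : Fin N => if adj i j then (2 : ℤ) ^ w i j else 0 with hA
  rw [← Matrix.det_transpose, Matrix.det_apply']
  refine Finset.sum_congr rfl fun σ _ => ?_
  have : ∏ i, A.transpose (σ i) i
      = if ∀ i, adj i (σ i) then 2 ^ (∑ i, w i (σ i)) else 0 := by
    by_cases h : ∀ i, adj i (σ i)
    · rw [if_pos h, ← Finset.prod_pow_eq_pow_sum]
      exact Finset.prod_congr rfl fun i _ => by simp [hA, Matrix.transpose_apply, h i]
    · rw [if_neg h]
      push_neg at h
      obtain ⟨i, hi⟩ := h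
      exact Finset.prod_eq_zero (Finset.mem_univ i) (by simp [hA, Matrix.transpose_apply, hi])
  rw [this]
  split <;> simp

/-- Let `G` be a bipartite graph with parts `{u₁, …, u_N}` and `{v₁, …, v_N}` given by
the adjacency relation `adj`, let `w` be a natural-number weight function on its edges
which is isolating for `G`, and let `A` be the `N × N` integer matrix with
`A i j = 2^(w i j)` if `adj i j` and `A i j = 0` otherwise.  Then `det A ≠ 0` if and
only if `G` has a perfect matching. -/
theorem det_ne_zero_iff_exists_perfect_matching (N : ℕ)
    (adj : Fin N → Fin N → Prop) [DecidableRel adj]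
    (w : Fin N → Fin N → ℕ) (hiso : BipIsolating adj w) :
    (Matrix.of fun i j : Fin N => if adj i j then (2 : ℤ) ^ w i j else 0).det ≠ 0 ↔
      ∃ σ : Equiv.Perm (Fin N), ∀ i, adj i (σ i) := by
  rw [det_expand]
  set T : Finset (Equiv.Perm (Fin N)) :=
    Finset.univ.filter (fun σ => ∀ i, adj i (σ i)) with hT
  have hsum : (∑ σ : Equiv.Perm (Fin N),
      if ∀ i, adj i (σ i) then (Equiv.Perm.sign σ : ℤ) * 2 ^ (∑ i, w i (σ i)) else 0)
      = ∑ σ ∈ T, (Equiv.Perm.sign σ : ℤ) * 2 ^ (∑ i, w i (σ i)) := by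
    rw [hT, Finset.sum_filter]
  rw [hsum]
  constructor
  · intro hne
    by_contra h
    push_neg at h
    have : T = ∅ := by
      rw [hT]
      apply Finset.filter_eq_empty_iff.mpr
      intro σ _
      push_neg
      exact h σ
    simp [this] at hne
  · rintro ⟨σ₀, hσ₀⟩
    have hσ₀T : σ₀ ∈ T := by simp [hT, hσ₀]
    obtain ⟨π, hπT, hπmin⟩ := T.exists_min_image (fun σ => ∑ i, w i (σ i)) ⟨σ₀, hσ₀T⟩
    have hπadj : ∀ i, adj i (π i) := by
      rw [hT] at hπT; exact (Finset.mem_filter.mp hπT).2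
    have hπmin' : ∀ ρ : Equiv.Perm (Fin N), (∀ i, adj i (ρ i)) →
        ∑ i, w i (π i) ≤ ∑ i, w i (ρ i) := fun ρ hρ => hπmin ρ (by simp [hT, hρ])
    set W := ∑ i, w i (π i) with hW
    -- every other matching has strictly larger weight
    have hkey : ∀ τ ∈ T \ {π}, (2 : ℤ) ^ (W + 1) ∣
        (Equiv.Perm.sign τ : ℤ) * 2 ^ (∑ i, w i (τ i)) := by
      intro τ hτ
      rw [Finset.mem_sdiff, Finset.mem_singleton] at hτ
      obtain ⟨hτT, hτne⟩ := hτ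
      have hτadj : ∀ i, adj i (τ i) := by
        rw [hT] at hτT; exact (Finset.mem_filter.mp hτT).2
      have hlt : W + 1 ≤ ∑ i, w i (τ i) := by
        rcases lt_or_ge W (∑ i, w i (τ i)) with h | h
        · omega
        · exfalso
          apply hτne
          exact hiso τ π hτadj hπadj
            (fun ρ hρ => le_trans h (hπmin' ρ hρ)) hπmin'
      exact Dvd.dvd.mul_left (pow_dvd_pow 2 hlt) _
    have hsplit : ∑ σ ∈ T, (Equiv.Perm.sign σ : ℤ) * 2 ^ (∑ i, w i (σ i))
        = (Equiv.Perm.sign π : ℤ) * 2 ^ W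
          + ∑ σ ∈ T \ {π}, (Equiv.Perm.sign σ : ℤ) * 2 ^ (∑ i, w i (σ i)) := by
      rw [← Finset.sum_sdiff (Finset.singleton_subset_iff.mpr hπT), Finset.sum_singleton,
        add_comm]
    rw [hsplit]
    intro habs
    have hdvd : (2 : ℤ) ^ (W + 1) ∣ (Equiv.Perm.sign π : ℤ) * 2 ^ W := by
      have h1 : (2 : ℤ) ^ (W + 1) ∣
          ∑ σ ∈ T \ {π}, (Equiv.Perm.sign σ : ℤ) * 2 ^ (∑ i, w i (σ i)) :=
        Finset.dvd_sum hkey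
      have : (Equiv.Perm.sign π : ℤ) * 2 ^ W
          = -∑ σ ∈ T \ {π}, (Equiv.Perm.sign σ : ℤ) * 2 ^ (∑ i, w i (σ i)) := by
        linarith
      rw [this]
      exact dvd_neg.mpr h1
    have hpos : (0 : ℤ) < 2 ^ W := by positivity
    rcases Int.units_eq_one_or (Equiv.Perm.sign π) with hs | hs <;>
      rw [hs] at hdvd <;> simp [pow_succ] at hdvd <;>
      have := Int.le_of_dvd hpos hdvd <;> nlinarith
end

section
/- Let G be a bipartite graph with vertex parts L = {u_1,...,u_N} and R = {v_1,...,v_N} that has a perfect matching, let w be a natural-number weight function on its edges that is isolating for G with unique minimum-weight perfect matching M*, and let A be the N×N integer matrix with A(i,j) = 2^{w(u_i,v_j)} if (u_i,v_j) is an edge of G and A(i,j) = 0 otherwise. Then the largest power of 2 dividing det(A) is 2^{w(M*)}; that is, 2^{w(M*)} divides det(A) and 2^{w(M*)+1} does not. -/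
/-- Let `G` be a bipartite graph with parts `{u₁, …, u_N}` and `{v₁, …, v_N}` given by
the adjacency relation `adj`, having a perfect matching, let `w` be an isolating
natural-number weight function with unique minimum-weight perfect matching `M*`
(given by the permutation `σ*`), and let `A` be the `N × N` integer matrix with
`A i j = 2^(w i j)` if `adj i j` and `A i j = 0` otherwise.  Then the largest power of
`2` dividing `det A` is `2^(w M*)`: `2^(w M*)` divides `det A` but `2^(w M* + 1)` does
not. -/
theorem two_pow_min_weight_exactly_divides_det (N : ℕ)
    (adj : Fin N → Fin N → Prop) [DecidableRel adj]
    (w : Fin N → Fin N → ℕ) (hiso : BipIsolating adj w)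
    (σ' : Equiv.Perm (Fin N)) (hσ' : ∀ i, adj i (σ' i))
    (hσ'min : ∀ ρ : Equiv.Perm (Fin N), (∀ i, adj i (ρ i)) →
      ∑ i, w i (σ' i) ≤ ∑ i, w i (ρ i)) :
    (2 : ℤ) ^ (∑ i, w i (σ' i)) ∣
        (Matrix.of fun i j : Fin N => if adj i j then (2 : ℤ) ^ w i j else 0).det ∧
      ¬ (2 : ℤ) ^ (∑ i, w i (σ' i) + 1) ∣
        (Matrix.of fun i j : Fin N => if adj i j then (2 : ℤ) ^ w i j else 0).det := by

  classical
  set A : Matrix (Fin N) (Fin N) ℤ :=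
    Matrix.of fun i j : Fin N => if adj i j then (2 : ℤ) ^ w i j else 0 with hA
  set W := ∑ i, w i (σ' i) with hW
  have hdet : A.det = ∑ σ : Equiv.Perm (Fin N),
      (Equiv.Perm.sign σ : ℤ) * ∏ i, A i (σ i) := by
    rw [← Matrix.det_transpose, Matrix.det_apply']
    rfl
  have hterm : ∀ σ : Equiv.Perm (Fin N),
      ∏ i, A i (σ i) = if (∀ i, adj i (σ i)) then (2 : ℤ) ^ (∑ i, w i (σ i)) else 0 := by
    intro σ
    by_cases h : ∀ i, adj i (σ i)
    · rw [if_pos h, ← Finset.prod_pow_eq_pow_sum]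
      exact Finset.prod_congr rfl fun i _ => by simp [hA, h i]
    · rw [if_neg h]
      push_neg at h
      obtain ⟨i, hi⟩ := h
      exact Finset.prod_eq_zero (Finset.mem_univ i) (by simp [hA, hi])
  have hsplit : A.det = (Equiv.Perm.sign σ' : ℤ) * 2 ^ W
      + ∑ σ ∈ Finset.univ.erase σ', (Equiv.Perm.sign σ : ℤ) * ∏ i, A i (σ i) := by
    rw [hdet, ← Finset.add_sum_erase _ _ (Finset.mem_univ σ')]
    congr 1
    rw [hterm σ', if_pos hσ']
  have hdvd : ∀ σ ∈ Finset.univ.erase σ',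
      (2 : ℤ) ^ (W + 1) ∣ (Equiv.Perm.sign σ : ℤ) * ∏ i, A i (σ i) := by
    intro σ hσ
    rw [hterm σ]
    by_cases h : ∀ i, adj i (σ i)
    · rw [if_pos h]
      have hne : σ ≠ σ' := (Finset.mem_erase.mp hσ).1
      have hge : W + 1 ≤ ∑ i, w i (σ i) := by
        rcases lt_or_eq_of_le (hσ'min σ h) with hlt | heq
        · omega
        · exact absurd (hiso σ σ' h hσ' (fun ρ hρ => heq ▸ hσ'min ρ hρ) hσ'min) hne
      exact Dvd.dvd.mul_left (pow_dvd_pow 2 hge) _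
    · simp [if_neg h]
  obtain ⟨c, hc⟩ := Finset.dvd_sum hdvd
  have hfact : A.det = 2 ^ W * ((Equiv.Perm.sign σ' : ℤ) + 2 * c) := by
    rw [hsplit, hc]; ring
  constructor
  · exact ⟨_, hfact⟩
  · intro hdvd2
    rw [hfact, pow_succ] at hdvd2
    have h2 : (2 : ℤ) ∣ ((Equiv.Perm.sign σ' : ℤ) + 2 * c) :=
      (mul_dvd_mul_iff_left (a := (2 : ℤ) ^ W) (by positivity)).mp hdvd2
    have hs : (2 : ℤ) ∣ (Equiv.Perm.sign σ' : ℤ) := by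
      have : (2 : ℤ) ∣ 2 * c := ⟨c, rfl⟩
      omega
    rcases Int.units_eq_one_or (Equiv.Perm.sign σ') with h | h <;> rw [h] at hs <;> norm_num at hs
end
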